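/- arXiv:quant-ph/0505095 — 3 statements merged into one kernel-verified Lean document; each statement's English description precedes it below -/
import Mathlib

section
/- Let Φ be a quantum channel on d×d complex matrices given in Kraus form Φ(X) = ∑_k A_k X A_kᴴ with ∑_k A_kᴴ A_k = 1. Suppose Φ is bijective as a ℂ-linear map on the space of d×d matrices, and Φ is not unitary, i.e. there is no unitary U with Φ(X) = U X Uᴴ for all X. Then the inverse map fails to preserve positivity on some pure state: there exists a unit vector ψ ∈ ℂ^d such that Φ⁻¹(ψψᴴ) is not positive semidefinite. -/
open Matrix BigOperators
open scoped ComplexOrder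

set_option linter.unusedSectionVars false
set_option maxHeartbeats 1000000

namespace C16
variable {d : ℕ} {K : Type} [Fintype K]


lemma perp_span {v w : Fin d → ℂ} (hv : star v ⬝ᵥ v = 1)
    (h : ∀ x : Fin d → ℂ, star v ⬝ᵥ x = 0 → star w ⬝ᵥ x = 0) :
    ∃ c : ℂ, w = c • v := by
  refine ⟨star v ⬝ᵥ w, ?_⟩
  set x := w - (star v ⬝ᵥ w) • v with hx
  have h1 : star v ⬝ᵥ x = 0 := by
    simp [hx, dotProduct_sub, hv, smul_eq_mul]
  have h2 : star w ⬝ᵥ x = 0 := h x h1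
  have h3 : star x ⬝ᵥ x = 0 := by
    rw [hx, star_sub, sub_dotProduct, h2, star_smul, smul_dotProduct, ← hx, h1]
    simp
  have h4 : x = 0 := dotProduct_star_self_eq_zero.mp h3
  have : w - (star v ⬝ᵥ w) • v = 0 := h4
  linear_combination (norm := module) this



lemma dot_star_comm (a x : Fin d → ℂ) : star x ⬝ᵥ a = star (star a ⬝ᵥ x) := by
  simp [dotProduct, Finset.mul_sum, mul_comm]

lemma vecMulVec_mulVec' (a b x : Fin d → ℂ) : vecMulVec a b *ᵥ x = (b ⬝ᵥ x) • a := by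
  ext i
  simp [vecMulVec, mulVec, dotProduct, Finset.mul_sum, mul_comm, mul_left_comm]

lemma quad_outer (a x : Fin d → ℂ) :
    star x ⬝ᵥ (vecMulVec a (star a) *ᵥ x) = (star a ⬝ᵥ x) * star (star a ⬝ᵥ x) := by
  rw [vecMulVec_mulVec', dotProduct_smul, ← dot_star_comm, smul_eq_mul]

lemma posSemidef_outer (v : Fin d → ℂ) : (vecMulVec v (star v)).PosSemidef := by
  refine PosSemidef.of_dotProduct_mulVec_nonneg ?_ ?_
  · ext i j
    simp [conjTranspose_apply, vecMulVec, mul_comm]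
  · intro x
    rw [quad_outer]
    exact mul_star_self_nonneg _

lemma trace_outer (v : Fin d → ℂ) : (vecMulVec v (star v)).trace = star v ⬝ᵥ v := by
  simp [trace, Matrix.diag, vecMulVec, dotProduct, mul_comm]

lemma eq_of_mulVec_eq {M N : Matrix (Fin d) (Fin d) ℂ}
    (h : ∀ x, M *ᵥ x = N *ᵥ x) : M = N := by
  ext i j
  have := congrFun (h (Pi.single j 1)) i
  simpa [mulVec_single] using this

lemma outer_conj (B : Matrix (Fin d) (Fin d) ℂ) (v : Fin d → ℂ) :
    B * vecMulVec v (star v) * Bᴴ = vecMulVec (B *ᵥ v) (star (B *ᵥ v)) := by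
  apply eq_of_mulVec_eq
  intro x
  rw [vecMulVec_mulVec', ← mulVec_mulVec, ← mulVec_mulVec, vecMulVec_mulVec']
  rw [mulVec_smul]
  congr 1
  rw [dotProduct_mulVec, ← star_mulVec]




lemma sum_mulVec' (f : K → Matrix (Fin d) (Fin d) ℂ) (x : Fin d → ℂ) :
    (∑ k, f k) *ᵥ x = ∑ k, f k *ᵥ x := by
  ext i
  simp only [mulVec, dotProduct, Matrix.sum_apply, Finset.sum_mul, Finset.sum_apply]
  rw [Finset.sum_comm]

lemma dotProduct_sum' (v : Fin d → ℂ) (w : K → Fin d → ℂ) :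
    v ⬝ᵥ (∑ k, w k) = ∑ k, v ⬝ᵥ w k := by
  simp only [dotProduct, Finset.sum_apply, Finset.mul_sum]
  rw [Finset.sum_comm]

lemma mul_star_self_eq_zero'' {z : ℂ} (h : z * star z = 0) : z = 0 := by
  rw [Complex.star_def, Complex.mul_conj] at h
  exact Complex.normSq_eq_zero.mp (by exact_mod_cast h)

lemma outer_sum_eq_outer (w : K → Fin d → ℂ) (η : Fin d → ℂ)
    (hη : star η ⬝ᵥ η = 1)
    (h : ∑ k, vecMulVec (w k) (star (w k)) = vecMulVec η (star η)) :
    ∀ k, ∃ c : ℂ, w k = c • η := by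
  intro k
  apply perp_span hη
  intro x hx
  have hq : ∑ j, (star (w j) ⬝ᵥ x) * star (star (w j) ⬝ᵥ x) = 0 := by
    have h0 := congrArg (fun M => star x ⬝ᵥ (M *ᵥ x)) h
    simp only [sum_mulVec', dotProduct_sum', quad_outer] at h0
    rw [h0, hx, zero_mul]
  have hterm : ∀ j ∈ Finset.univ, (0:ℂ) ≤ (star (w j) ⬝ᵥ x) * star (star (w j) ⬝ᵥ x) :=
    fun j _ => mul_star_self_nonneg _
  have := (Finset.sum_eq_zero_iff_of_nonneg hterm).mp hq k (Finset.mem_univ k)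
  exact mul_star_self_eq_zero'' this



lemma extremal {v : Fin d → ℂ} (hv : star v ⬝ᵥ v = 1) {M : Matrix (Fin d) (Fin d) ℂ}
    (hM : M.PosSemidef) (hN : (vecMulVec v (star v) - M).PosSemidef) :
    ∃ c : ℂ, M = c • vecMulVec v (star v) := by
  have hstepA : ∀ x, star v ⬝ᵥ x = 0 → M *ᵥ x = 0 := by
    intro x hx
    have h1 : star x ⬝ᵥ ((vecMulVec v (star v) - M) *ᵥ x) = - (star x ⬝ᵥ (M *ᵥ x)) := by
      rw [sub_mulVec, dotProduct_sub, quad_outer, hx, zero_mul, zero_sub]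
    have h2 := hN.dotProduct_mulVec_nonneg x
    have h3 := hM.dotProduct_mulVec_nonneg x
    rw [h1] at h2
    have h4 : star x ⬝ᵥ (M *ᵥ x) = 0 := le_antisymm (by simpa using neg_nonneg.mp (by simpa using h2)) h3
    exact (hM.dotProduct_mulVec_zero_iff x).mp h4
  have hstepB : ∀ y, M *ᵥ y = (star v ⬝ᵥ y) • (M *ᵥ v) := by
    intro y
    have hx : star v ⬝ᵥ (y - (star v ⬝ᵥ y) • v) = 0 := by
      rw [dotProduct_sub, dotProduct_smul, hv, smul_eq_mul, mul_one, sub_self]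
    have h5 := hstepA _ hx
    rw [mulVec_sub, mulVec_smul] at h5
    exact sub_eq_zero.mp h5
  have hstepC : ∃ c : ℂ, M *ᵥ v = c • v := by
    apply perp_span hv
    intro x hx
    rw [star_mulVec, hM.1, ← dotProduct_mulVec, hstepA x hx, dotProduct_zero]
  obtain ⟨c, hc⟩ := hstepC
  refine ⟨c, eq_of_mulVec_eq fun y => ?_⟩
  rw [hstepB y, hc, smul_mulVec, vecMulVec_mulVec', smul_comm]


lemma posSemidef_sum' {ι : Type} (s : Finset ι) (f : ι → Matrix (Fin d) (Fin d) ℂ)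
    (h : ∀ i ∈ s, (f i).PosSemidef) : (∑ i ∈ s, f i).PosSemidef := by
  classical
  induction s using Finset.induction with
  | empty => simpa using Matrix.PosSemidef.zero
  | @insert a s hnot ih =>
    rw [Finset.sum_insert hnot]
    exact (h _ (Finset.mem_insert_self _ _)).add
      (ih fun i hi => h i (Finset.mem_insert_of_mem hi))

lemma unitary_col_unit (U : Matrix.unitaryGroup (Fin d) ℂ) (i : Fin d) :
    star (fun a => (U : Matrix (Fin d) (Fin d) ℂ) a i) ⬝ᵥ (fun a => (U : Matrix (Fin d) (Fin d) ℂ) a i) = 1 := by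
  have h := Matrix.UnitaryGroup.star_mul_self U
  have h2 := congrFun (congrFun (congrArg (fun M => (M : Matrix (Fin d) (Fin d) ℂ)) h) i) i
  simpa [mul_apply, dotProduct, one_apply] using h2

lemma trace_spectral {σ : Matrix (Fin d) (Fin d) ℂ} (hσ : σ.IsHermitian) :
    σ.trace = ∑ i, (hσ.eigenvalues i : ℂ) := by
  conv_lhs => rw [hσ.spectral_theorem, Unitary.conjStarAlgAut_apply]
  rw [Matrix.trace_mul_comm, ← mul_assoc, Matrix.UnitaryGroup.star_mul_self, one_mul,
    trace_diagonal]
  simp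

lemma spectral_sum {σ : Matrix (Fin d) (Fin d) ℂ} (hσ : σ.IsHermitian) :
    σ = ∑ i, (hσ.eigenvalues i : ℂ) •
      vecMulVec (fun a => (hσ.eigenvectorUnitary : Matrix (Fin d) (Fin d) ℂ) a i)
        (star fun a => (hσ.eigenvectorUnitary : Matrix (Fin d) (Fin d) ℂ) a i) := by
  conv_lhs => rw [hσ.spectral_theorem, Unitary.conjStarAlgAut_apply]
  ext a b
  simp only [mul_apply, diagonal_apply, Matrix.sum_apply, Pi.smul_apply, smul_eq_mul,
    vecMulVec_apply, Function.comp_apply, Matrix.star_apply, Pi.star_apply,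
    RCLike.star_def, mul_ite, mul_zero, ite_mul, zero_mul, Finset.sum_ite_eq,
    Finset.sum_ite_eq', Finset.mem_univ, if_true]
  refine Finset.sum_congr rfl fun j _ => ?_
  simp only [Matrix.smul_apply, vecMulVec_apply, Pi.star_apply, RCLike.star_def, smul_eq_mul]
  rw [mul_right_comm]
  exact mul_comm _ _



lemma psd_smul_real {Y : Matrix (Fin d) (Fin d) ℂ} (hY : Y.PosSemidef) {t : ℝ} (ht : 0 ≤ t) :
    ((t : ℂ) • Y).PosSemidef := by
  refine PosSemidef.of_dotProduct_mulVec_nonneg ?_ ?_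
  · have := hY.1
    unfold Matrix.IsHermitian at *
    rw [conjTranspose_smul, this]
    congr 1
    simp [Complex.star_def, Complex.conj_ofReal]
  · intro x
    rw [smul_mulVec, dotProduct_smul]
    rw [smul_eq_mul]
    have h2 := hY.dotProduct_mulVec_nonneg x
    have h1 : (0:ℂ) ≤ (t:ℂ) := by exact_mod_cast ht
    exact mul_nonneg h1 h2

lemma trace_phi (A : K → Matrix (Fin d) (Fin d) ℂ) (hA : ∑ k, (A k)ᴴ * A k = 1)
    (Y : Matrix (Fin d) (Fin d) ℂ) : (∑ k, A k * Y * (A k)ᴴ).trace = Y.trace := by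
  rw [trace_sum]
  calc ∑ k, (A k * Y * (A k)ᴴ).trace = ∑ k, ((A k)ᴴ * A k * Y).trace := by
        refine Finset.sum_congr rfl fun k _ => ?_
        rw [trace_mul_cycle]
    _ = (∑ k, (A k)ᴴ * A k * Y).trace := (trace_sum _ _).symm
    _ = ((∑ k, (A k)ᴴ * A k) * Y).trace := by rw [Finset.sum_mul]
    _ = Y.trace := by rw [hA, one_mul]

lemma phi_sum_smul (A : K → Matrix (Fin d) (Fin d) ℂ) {ι : Type} [Fintype ι]
    (c : ι → ℂ) (Y : ι → Matrix (Fin d) (Fin d) ℂ) :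
    ∑ k, A k * (∑ i, c i • Y i) * (A k)ᴴ = ∑ i, c i • ∑ k, A k * Y i * (A k)ᴴ := by
  calc ∑ k, A k * (∑ i, c i • Y i) * (A k)ᴴ
      = ∑ k, ∑ i, c i • (A k * Y i * (A k)ᴴ) := by
        refine Finset.sum_congr rfl fun k _ => ?_
        rw [Finset.mul_sum, Finset.sum_mul]
        refine Finset.sum_congr rfl fun i _ => ?_
        rw [mul_smul_comm, smul_mul_assoc]
    _ = ∑ i, ∑ k, c i • (A k * Y i * (A k)ᴴ) := Finset.sum_comm
    _ = ∑ i, c i • ∑ k, A k * Y i * (A k)ᴴ := by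
        refine Finset.sum_congr rfl fun i _ => ?_
        rw [Finset.smul_sum]

lemma purity (A : K → Matrix (Fin d) (Fin d) ℂ) (hA : ∑ k, (A k)ᴴ * A k = 1)
    (hinj : Function.Injective (fun X : Matrix (Fin d) (Fin d) ℂ => ∑ k, A k * X * (A k)ᴴ))
    (H : ∀ ψ : Fin d → ℂ, star ψ ⬝ᵥ ψ = 1 →
      ∃ Y, (∑ k, A k * Y * (A k)ᴴ) = vecMulVec ψ (star ψ) ∧ Y.PosSemidef)
    {φ : Fin d → ℂ} (hφ : star φ ⬝ᵥ φ = 1) :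
    ∃ η, star η ⬝ᵥ η = 1 ∧
      ∑ k, A k * (vecMulVec φ (star φ)) * (A k)ᴴ = vecMulVec η (star η) := by
  set σ : Matrix (Fin d) (Fin d) ℂ := ∑ k, A k * (vecMulVec φ (star φ)) * (A k)ᴴ with hσdef
  have hσpsd : σ.PosSemidef :=
    posSemidef_sum' _ _ (fun k _ => (posSemidef_outer φ).mul_mul_conjTranspose_same (A k))
  have hherm := hσpsd.1
  have hcolunit : ∀ i : Fin d,
      star (fun a => (hherm.eigenvectorUnitary : Matrix (Fin d) (Fin d) ℂ) a i) ⬝ᵥ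
        (fun a => (hherm.eigenvectorUnitary : Matrix (Fin d) (Fin d) ℂ) a i) = 1 :=
    fun i => unitary_col_unit hherm.eigenvectorUnitary i
  choose Y hY hYpsd using fun i : Fin d => H _ (hcolunit i)
  have hμ : ∀ i, 0 ≤ hherm.eigenvalues i := hσpsd.eigenvalues_nonneg
  -- trace of σ is 1
  have htrσ : σ.trace = 1 := by
    rw [hσdef, trace_phi A hA, trace_outer, hφ]
  have hsum1 : ∑ i, (hherm.eigenvalues i : ℂ) = 1 := by
    rw [← trace_spectral hherm, htrσ]
  -- Z := ∑ μ i • Y i is a preimage of σ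
  have hΦZ : ∑ k, A k * (∑ i, (hherm.eigenvalues i : ℂ) • Y i) * (A k)ᴴ = σ := by
    rw [phi_sum_smul]
    simp only [hY]
    exact (spectral_sum hherm).symm
  have hZφ : (∑ i, (hherm.eigenvalues i : ℂ) • Y i) = vecMulVec φ (star φ) := by
    apply hinj
    simpa using hΦZ
  obtain ⟨i₀, hi₀⟩ : ∃ i₀, hherm.eigenvalues i₀ ≠ 0 := by
    by_contra hc
    push_neg at hc
    rw [Finset.sum_eq_zero (fun i _ => by rw [hc i, Complex.ofReal_zero])] at hsum1
    exact zero_ne_one hsum1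
  have hMpsd : ((hherm.eigenvalues i₀ : ℂ) • Y i₀).PosSemidef :=
    psd_smul_real (hYpsd i₀) (hμ i₀)
  have hNpsd : (vecMulVec φ (star φ) - (hherm.eigenvalues i₀ : ℂ) • Y i₀).PosSemidef := by
    have hsplit : vecMulVec φ (star φ) - (hherm.eigenvalues i₀ : ℂ) • Y i₀
        = ∑ i ∈ Finset.univ.erase i₀, (hherm.eigenvalues i : ℂ) • Y i := by
      rw [← hZφ, ← Finset.add_sum_erase _ _ (Finset.mem_univ i₀), add_sub_cancel_left]
    rw [hsplit]
    exact posSemidef_sum' _ _ (fun i _ => psd_smul_real (hYpsd i) (hμ i))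
  obtain ⟨c, hc⟩ := extremal hφ hMpsd hNpsd
  -- compute c via traces
  have htrY : (Y i₀).trace = 1 := by
    have h1 := trace_phi A hA (Y i₀)
    rw [hY i₀, trace_outer, hcolunit i₀] at h1
    exact h1.symm
  have htrc : (hherm.eigenvalues i₀ : ℂ) = c := by
    have := congrArg Matrix.trace hc
    rw [trace_smul, trace_smul, htrY, trace_outer, hφ, smul_eq_mul, smul_eq_mul,
      mul_one, mul_one] at this
    exact this
  have hY₀ : Y i₀ = vecMulVec φ (star φ) := by
    have hcast : (hherm.eigenvalues i₀ : ℂ) ≠ 0 := by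
      exact_mod_cast hi₀
    apply smul_right_injective (Matrix (Fin d) (Fin d) ℂ) hcast
    show (hherm.eigenvalues i₀ : ℂ) • Y i₀ = (hherm.eigenvalues i₀ : ℂ) • vecMulVec φ (star φ)
    rw [hc, htrc]
  refine ⟨_, hcolunit i₀, ?_⟩
  rw [← hY i₀, hY₀]



lemma dot_self_real (x : Fin d → ℂ) :
    star x ⬝ᵥ x = ((∑ i, Complex.normSq (x i) : ℝ) : ℂ) := by
  rw [dotProduct]
  push_cast
  refine Finset.sum_congr rfl fun i _ => ?_
  rw [Pi.star_apply, Complex.star_def, mul_comm, Complex.mul_conj]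

lemma lines (A : K → Matrix (Fin d) (Fin d) ℂ) (hA : ∑ k, (A k)ᴴ * A k = 1)
    (hinj : Function.Injective (fun X : Matrix (Fin d) (Fin d) ℂ => ∑ k, A k * X * (A k)ᴴ))
    (H : ∀ ψ : Fin d → ℂ, star ψ ⬝ᵥ ψ = 1 →
      ∃ Y, (∑ k, A k * Y * (A k)ᴴ) = vecMulVec ψ (star ψ) ∧ Y.PosSemidef) :
    ∀ x : Fin d → ℂ, ∃ η, ∀ k, ∃ c : ℂ, A k *ᵥ x = c • η := by
  intro x
  by_cases hx : x = 0
  · exact ⟨0, fun k => ⟨0, by simp [hx]⟩⟩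
  · obtain ⟨i, hi⟩ := Function.ne_iff.mp hx
    have hi' : x i ≠ 0 := hi
    set S : ℝ := ∑ i, Complex.normSq (x i) with hSdef
    have hSpos : 0 < S := by
      refine Finset.sum_pos' (fun j _ => Complex.normSq_nonneg _) ⟨i, Finset.mem_univ i, ?_⟩
      exact (Complex.normSq_pos).mpr hi'
    set r : ℝ := Real.sqrt S with hrdef
    have hrpos : 0 < r := Real.sqrt_pos.mpr hSpos
    have hrr : r * r = S := Real.mul_self_sqrt hSpos.le
    set φ : Fin d → ℂ := ((r⁻¹ : ℝ) : ℂ) • x with hφdef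
    have hφunit : star φ ⬝ᵥ φ = 1 := by
      rw [hφdef, star_smul, smul_dotProduct, dotProduct_smul, dot_self_real, ← hSdef]
      rw [smul_eq_mul, smul_eq_mul, Complex.star_def, Complex.conj_ofReal]
      rw [← Complex.ofReal_mul, ← Complex.ofReal_mul]
      norm_cast
      field_simp
      rw [sq]; exact hrr.symm
    obtain ⟨η, hη, hΦφ⟩ := purity A hA hinj H hφunit
    have houter : ∑ k, vecMulVec (A k *ᵥ φ) (star (A k *ᵥ φ)) = vecMulVec η (star η) := by
      rw [← hΦφ]
      refine Finset.sum_congr rfl fun k _ => ?_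
      rw [outer_conj]
    have hcols := outer_sum_eq_outer _ _ hη houter
    refine ⟨η, fun k => ?_⟩
    obtain ⟨c, hc⟩ := hcols k
    refine ⟨(r : ℂ) * c, ?_⟩
    have hxφ : x = (r : ℂ) • φ := by
      rw [hφdef, smul_smul, ← Complex.ofReal_mul]
      rw [mul_inv_cancel₀ (ne_of_gt hrpos)]
      simp
    rw [hxφ, mulVec_smul, hc, smul_smul]

lemma linesP (A : K → Matrix (Fin d) (Fin d) ℂ)
    (hlines : ∀ x : Fin d → ℂ, ∃ η, ∀ k, ∃ c : ℂ, A k *ᵥ x = c • η) :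
    ∀ (x : Fin d → ℂ) (k l : K), A l *ᵥ x ≠ 0 →
      ∃ c : ℂ, A k *ᵥ x = c • (A l *ᵥ x) := by
  intro x k l hl
  obtain ⟨η, hη⟩ := hlines x
  obtain ⟨ck, hck⟩ := hη k
  obtain ⟨cl, hcl⟩ := hη l
  have hcl0 : cl ≠ 0 := by
    intro h0
    exact hl (by rw [hcl, h0, zero_smul])
  refine ⟨ck * cl⁻¹, ?_⟩
  rw [hck, hcl, smul_smul]
  congr 1
  field_simp




lemma caseI (A : K → Matrix (Fin d) (Fin d) ℂ) (hA : ∑ k, (A k)ᴴ * A k = 1)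
    (hd : 1 ≤ d)
    (P : ∀ (x : Fin d → ℂ) (k l : K), A l *ᵥ x ≠ 0 →
      ∃ c : ℂ, A k *ᵥ x = c • (A l *ᵥ x))
    (k₀ : K) (x₀ y₀ : Fin d → ℂ)
    (hind : ∀ a b : ℂ, a • (A k₀ *ᵥ x₀) + b • (A k₀ *ᵥ y₀) = 0 → a = 0 ∧ b = 0) :
    ∃ U : Matrix (Fin d) (Fin d) ℂ, Uᴴ * U = 1 ∧
      ∀ X, ∑ k, A k * X * (A k)ᴴ = U * X * Uᴴ := by
  have hu : A k₀ *ᵥ x₀ ≠ 0 := by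
    intro h
    exact one_ne_zero (hind 1 0 (by simp [h])).1
  have hv : A k₀ *ᵥ y₀ ≠ 0 := by
    intro h
    exact one_ne_zero (hind 0 1 (by simp [h])).2
  have pair : ∀ (l : K) (z w : Fin d → ℂ) (cz cw : ℂ),
      (∀ a b : ℂ, a • (A k₀ *ᵥ z) + b • (A k₀ *ᵥ w) = 0 → a = 0 ∧ b = 0) →
      A l *ᵥ z = cz • (A k₀ *ᵥ z) → A l *ᵥ w = cw • (A k₀ *ᵥ w) → cz = cw := by
    intro l z w cz cw hzw hz hw
    have hBzw : A k₀ *ᵥ (z + w) ≠ 0 := by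
      rw [mulVec_add]
      intro h0
      exact one_ne_zero (hzw 1 1 (by rw [one_smul, one_smul]; exact h0)).1
    obtain ⟨c', hc'⟩ := P (z + w) l k₀ hBzw
    rw [mulVec_add, mulVec_add, hz, hw] at hc'
    have hcomb : (cz - c') • (A k₀ *ᵥ z) + (cw - c') • (A k₀ *ᵥ w) = 0 := by
      rw [smul_add] at hc'
      rw [sub_smul, sub_smul]
      linear_combination (norm := module) hc'
    obtain ⟨h1, h2⟩ := hzw _ _ hcomb
    rw [sub_eq_zero] at h1 h2
    rw [h1, h2]
  have main : ∀ l, ∃ cl : ℂ, ∀ z, A l *ᵥ z = cl • (A k₀ *ᵥ z) := by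
    intro l
    obtain ⟨c, hcx⟩ := P x₀ l k₀ hu
    obtain ⟨cv, hcy⟩ := P y₀ l k₀ hv
    have hceq : c = cv := pair l x₀ y₀ c cv hind hcx hcy
    refine ⟨c, fun z => ?_⟩
    by_cases hz0 : A k₀ *ᵥ z = 0
    · have h1 : A k₀ *ᵥ (z + x₀) = A k₀ *ᵥ x₀ := by rw [mulVec_add, hz0, zero_add]
      have h2 : A k₀ *ᵥ (z + x₀) ≠ 0 := by rw [h1]; exact hu
      obtain ⟨c'', hc''⟩ := P (z + x₀) l k₀ h2
      have hindzx : ∀ a b : ℂ, a • (A k₀ *ᵥ (z + x₀)) + b • (A k₀ *ᵥ y₀) = 0 →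
          a = 0 ∧ b = 0 := by
        intro a b hab
        rw [h1] at hab
        exact hind a b hab
      have hc''eq : c'' = cv := pair l (z + x₀) y₀ c'' cv hindzx hc'' hcy
      rw [mulVec_add, h1, hcx] at hc''
      rw [hz0, smul_zero]
      have h3 : A l *ᵥ z = c'' • (A k₀ *ᵥ x₀) - c • (A k₀ *ᵥ x₀) := by
        linear_combination (norm := module) hc''
      rw [h3, hc''eq, ← hceq, sub_self]
    · obtain ⟨cz, hcz⟩ := P z l k₀ hz0
      suffices hsuff : cz = c by rw [hcz, hsuff]
      by_cases hid : ∀ a b : ℂ, a • (A k₀ *ᵥ z) + b • (A k₀ *ᵥ x₀) = 0 → a = 0 ∧ b = 0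
      · exact pair l z x₀ cz c hid hcz hcx
      · push_neg at hid
        obtain ⟨a, b, heq, hne⟩ := hid
        have ha : a ≠ 0 := by
          intro ha0
          have hb := hne ha0
          rw [ha0, zero_smul, zero_add] at heq
          exact hu ((smul_eq_zero.mp heq).resolve_left hb)
        have hb : b ≠ 0 := by
          intro hb0
          rw [hb0, zero_smul, add_zero] at heq
          exact hz0 ((smul_eq_zero.mp heq).resolve_left ha)
        have hBz : A k₀ *ᵥ z = (-(b / a)) • (A k₀ *ᵥ x₀) := by
          apply smul_right_injective (Fin d → ℂ) ha
          show a • (A k₀ *ᵥ z) = a • ((-(b / a)) • (A k₀ *ᵥ x₀))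
          rw [smul_smul]
          have h5 : a * (-(b / a)) = -b := by field_simp
          rw [h5, neg_smul]
          exact eq_neg_of_add_eq_zero_left heq
        have hindzy : ∀ a' b' : ℂ, a' • (A k₀ *ᵥ z) + b' • (A k₀ *ᵥ y₀) = 0 →
            a' = 0 ∧ b' = 0 := by
          intro a' b' h'
          rw [hBz, smul_smul] at h'
          obtain ⟨h1, h2⟩ := hind _ _ h'
          refine ⟨?_, h2⟩
          have hba : (-(b / a)) ≠ 0 := by
            simp only [neg_ne_zero]
            exact div_ne_zero hb ha
          exact (mul_eq_zero.mp h1).resolve_right hba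
        have h6 : cz = cv := pair l z y₀ cz cv hindzy hcz hcy
        rw [h6, hceq]
  choose cf hcf using main
  have hmat : ∀ l, A l = cf l • A k₀ := fun l =>
    eq_of_mulVec_eq (fun x => by rw [hcf l x, smul_mulVec])
  have h8 : ((∑ l, Complex.normSq (cf l) : ℝ) : ℂ) = ∑ l, star (cf l) * cf l := by
    push_cast
    refine Finset.sum_congr rfl fun l _ => ?_
    rw [Complex.star_def, mul_comm, Complex.mul_conj]
  have hsumc : ((∑ l, Complex.normSq (cf l) : ℝ) : ℂ) • ((A k₀)ᴴ * A k₀) = 1 := by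
    have h7 : ∑ l, (A l)ᴴ * A l = ∑ l, (star (cf l) * cf l) • ((A k₀)ᴴ * A k₀) := by
      refine Finset.sum_congr rfl fun l _ => ?_
      rw [hmat l, conjTranspose_smul, smul_mul_smul_comm]
    rw [← Finset.sum_smul] at h7
    rw [h8, ← h7, hA]
  set S : ℝ := ∑ l, Complex.normSq (cf l) with hS
  have hS0 : S ≠ 0 := by
    intro h0
    rw [h0] at hsumc
    simp only [Complex.ofReal_zero, zero_smul] at hsumc
    have i0 : Fin d := ⟨0, hd⟩
    have h10 := congrFun (congrFun hsumc i0) i0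
    simp [one_apply] at h10
  have hSpos : 0 < S :=
    lt_of_le_of_ne (Finset.sum_nonneg fun l _ => Complex.normSq_nonneg _) (Ne.symm hS0)
  have hrr : Real.sqrt S * Real.sqrt S = S := Real.mul_self_sqrt hSpos.le
  refine ⟨((Real.sqrt S : ℝ) : ℂ) • A k₀, ?_, ?_⟩
  · rw [conjTranspose_smul, smul_mul_smul_comm, Complex.star_def, Complex.conj_ofReal,
      ← Complex.ofReal_mul, hrr]
    exact hsumc
  · intro X
    have h9 : ∀ l, A l * X * (A l)ᴴ = (star (cf l) * cf l) • (A k₀ * X * (A k₀)ᴴ) := by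
      intro l
      rw [hmat l, conjTranspose_smul, smul_mul_assoc, smul_mul_smul_comm,
        mul_comm (cf l) (star (cf l))]
    calc ∑ k, A k * X * (A k)ᴴ = (∑ l, star (cf l) * cf l) • (A k₀ * X * (A k₀)ᴴ) := by
          rw [Finset.sum_smul]
          exact Finset.sum_congr rfl fun l _ => h9 l
      _ = ((S : ℝ) : ℂ) • (A k₀ * X * (A k₀)ᴴ) := by rw [h8]
      _ = (((Real.sqrt S : ℝ) : ℂ) • A k₀) * X * (((Real.sqrt S : ℝ) : ℂ) • A k₀)ᴴ := by
          rw [conjTranspose_smul, smul_mul_assoc, smul_mul_smul_comm,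
            Complex.star_def, Complex.conj_ofReal, ← Complex.ofReal_mul, hrr]




lemma caseII (A : K → Matrix (Fin d) (Fin d) ℂ) (hA : ∑ k, (A k)ᴴ * A k = 1)
    (hd2 : 2 ≤ d)
    (hsurj : Function.Surjective
      (fun X : Matrix (Fin d) (Fin d) ℂ => ∑ k, A k * X * (A k)ᴴ))
    (P : ∀ (x : Fin d → ℂ) (k l : K), A l *ᵥ x ≠ 0 →
      ∃ c : ℂ, A k *ᵥ x = c • (A l *ᵥ x))
    (hdep : ∀ (k : K) (x y : Fin d → ℂ), ∃ a b : ℂ,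
      (a • (A k *ᵥ x) + b • (A k *ᵥ y) = 0) ∧ (a = 0 → b ≠ 0)) :
    False := by
  have h0d : 0 < d := by omega
  have h1d : 1 < d := by omega
  set i0 : Fin d := ⟨0, h0d⟩ with hi0
  set i1 : Fin d := ⟨1, h1d⟩ with hi1
  have hne01 : i1 ≠ i0 := by
    intro h
    have := congrArg Fin.val h
    simp [hi0, hi1] at this
  set e₀ : Fin d → ℂ := Pi.single i0 1 with he₀
  obtain ⟨k₀, hk₀⟩ : ∃ k₀, A k₀ *ᵥ e₀ ≠ 0 := by
    by_contra hall0
    push_neg at hall0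
    have h1 : (∑ k, (A k)ᴴ * A k) *ᵥ e₀ = e₀ := by rw [hA, one_mulVec]
    rw [sum_mulVec'] at h1
    have h2 : ∀ k : K, ((A k)ᴴ * A k) *ᵥ e₀ = 0 := by
      intro k
      rw [← mulVec_mulVec, hall0 k, mulVec_zero]
    rw [Finset.sum_eq_zero (fun k _ => h2 k)] at h1
    have h3 := congrFun h1 i0
    rw [he₀] at h3
    simp [Pi.single_apply] at h3
  -- every A k *ᵥ x lies on the line through u := A k₀ *ᵥ e₀
  have hall : ∀ (k : K) (x : Fin d → ℂ), ∃ c : ℂ, A k *ᵥ x = c • (A k₀ *ᵥ e₀) := by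
    intro k x
    by_cases hx0 : A k₀ *ᵥ x = 0
    · have hsum : A k₀ *ᵥ (x + e₀) = A k₀ *ᵥ e₀ := by rw [mulVec_add, hx0, zero_add]
      have hne : A k₀ *ᵥ (x + e₀) ≠ 0 := by rw [hsum]; exact hk₀
      obtain ⟨c1, hc1⟩ := P (x + e₀) k k₀ hne
      obtain ⟨c2, hc2⟩ := P e₀ k k₀ hk₀
      refine ⟨c1 - c2, ?_⟩
      have h4 : A k *ᵥ x = A k *ᵥ (x + e₀) - A k *ᵥ e₀ := by
        rw [mulVec_add]; abel
      rw [h4, hc1, hsum, hc2, sub_smul]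
    · obtain ⟨a, b, heq, hne⟩ := hdep k₀ x e₀
      have ha : a ≠ 0 := by
        intro ha0
        rw [ha0, zero_smul, zero_add] at heq
        exact hk₀ ((smul_eq_zero.mp heq).resolve_left (hne ha0))
      have hxu : A k₀ *ᵥ x = (-(b / a)) • (A k₀ *ᵥ e₀) := by
        apply smul_right_injective (Fin d → ℂ) ha
        show a • (A k₀ *ᵥ x) = a • ((-(b / a)) • (A k₀ *ᵥ e₀))
        rw [smul_smul]
        have h5 : a * (-(b / a)) = -b := by field_simp
        rw [h5, neg_smul]
        exact eq_neg_of_add_eq_zero_left heq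
      obtain ⟨ck, hck⟩ := P x k k₀ hx0
      exact ⟨ck * (-(b / a)), by rw [hck, hxu, smul_smul]⟩
  -- columns of the image of the surjectivity witness
  obtain ⟨X, hX⟩ := hsurj 1
  have hX' : ∑ k, A k * X * (A k)ᴴ = 1 := hX
  have hcol : ∀ j : Fin d, ∃ c : ℂ, Pi.single j (1:ℂ) = c • (A k₀ *ᵥ e₀) := by
    intro j
    have h5 : (∑ k, A k * X * (A k)ᴴ) *ᵥ (Pi.single j 1) = Pi.single j 1 := by
      rw [hX', one_mulVec]
    rw [sum_mulVec'] at h5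
    choose cs hcs using fun k => hall k ((X * (A k)ᴴ) *ᵥ (Pi.single j 1))
    refine ⟨∑ k, cs k, ?_⟩
    rw [← h5]
    calc ∑ k, (A k * X * (A k)ᴴ) *ᵥ Pi.single j 1
        = ∑ k, cs k • (A k₀ *ᵥ e₀) := by
          refine Finset.sum_congr rfl fun k _ => ?_
          rw [mul_assoc, ← mulVec_mulVec]
          exact hcs k
      _ = (∑ k, cs k) • (A k₀ *ᵥ e₀) := (Finset.sum_smul).symm
  obtain ⟨c0, hc0⟩ := hcol i0
  obtain ⟨c1, hc1⟩ := hcol i1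
  have e00 : (1 : ℂ) = c0 * (A k₀ *ᵥ e₀) i0 := by
    have := congrFun hc0 i0
    simpa [Pi.single_apply] using this
  have e01 : (0 : ℂ) = c0 * (A k₀ *ᵥ e₀) i1 := by
    have := congrFun hc0 i1
    simpa [Pi.single_apply, hne01] using this
  have e11 : (1 : ℂ) = c1 * (A k₀ *ᵥ e₀) i1 := by
    have := congrFun hc1 i1
    simpa [Pi.single_apply] using this
  have hc00 : c0 ≠ 0 := by
    intro h
    rw [h, zero_mul] at e00
    exact one_ne_zero e00
  have hu1 : (A k₀ *ᵥ e₀) i1 = 0 := by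
    rcases mul_eq_zero.mp e01.symm with h | h
    · exact absurd h hc00
    · exact h
  rw [hu1, mul_zero] at e11
  exact one_ne_zero e11

lemma dim1 (A : K → Matrix (Fin 1) (Fin 1) ℂ) (hA : ∑ k, (A k)ᴴ * A k = 1) :
    ∃ U : Matrix (Fin 1) (Fin 1) ℂ, Uᴴ * U = 1 ∧
      ∀ X, ∑ k, A k * X * (A k)ᴴ = U * X * Uᴴ := by
  refine ⟨1, by simp, fun X => ?_⟩
  have hA00 : ∑ k, (starRingEnd ℂ) (A k 0 0) * A k 0 0 = 1 := by
    have := congrFun (congrFun hA 0) 0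
    simpa [Matrix.sum_apply, mul_apply, Fin.sum_univ_one, one_apply,
      conjTranspose_apply] using this
  ext i j
  have hi : i = 0 := Subsingleton.elim i 0
  have hj : j = 0 := Subsingleton.elim j 0
  subst hi hj
  rw [conjTranspose_one, one_mul, mul_one]
  rw [Matrix.sum_apply]
  calc ∑ k, (A k * X * (A k)ᴴ) 0 0
      = ∑ k, X 0 0 * ((starRingEnd ℂ) (A k 0 0) * A k 0 0) := by
        refine Finset.sum_congr rfl fun k _ => ?_
        simp [mul_apply, Fin.sum_univ_one, conjTranspose_apply]
        ring
    _ = X 0 0 * ∑ k, (starRingEnd ℂ) (A k 0 0) * A k 0 0 := (Finset.mul_sum _ _ _).symm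
    _ = X 0 0 := by rw [hA00, mul_one]
end C16

/-- if a quantum channel `Φ(X) = ∑ k, A k * X * (A k)ᴴ` is bijective as a
linear map on matrices but not unitary, then its inverse fails to preserve positivity on
some pure state: there is a unit vector `ψ` whose (unique) preimage of `ψψᴴ` under `Φ`
is not positive semidefinite. -/
theorem clean_povm_stmt16 (d : ℕ) (hd : 1 ≤ d) (K : Type) [Fintype K]
    (A : K → Matrix (Fin d) (Fin d) ℂ)
    (hA : ∑ k, (A k)ᴴ * A k = 1)
    (hbij : Function.Bijective
      (fun X : Matrix (Fin d) (Fin d) ℂ => ∑ k, A k * X * (A k)ᴴ))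
    (hnotU : ¬ ∃ U : Matrix (Fin d) (Fin d) ℂ, Uᴴ * U = 1 ∧
      ∀ X : Matrix (Fin d) (Fin d) ℂ, ∑ k, A k * X * (A k)ᴴ = U * X * Uᴴ) :
    ∃ ψ : Fin d → ℂ, dotProduct (star ψ) ψ = 1 ∧
      ∀ Y : Matrix (Fin d) (Fin d) ℂ,
        (∑ k, A k * Y * (A k)ᴴ = vecMulVec ψ (star ψ)) → ¬ Y.PosSemidef := by
  by_contra hcon
  push_neg at hcon
  by_cases hd1 : d = 1
  · subst hd1
    exact hnotU (C16.dim1 A hA)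
  · have hd2 : 2 ≤ d := by omega
    have hlines := C16.lines A hA hbij.injective hcon
    have P := C16.linesP A hlines
    by_cases hcase : ∃ (k₀ : K) (x₀ y₀ : Fin d → ℂ),
        ∀ a b : ℂ, a • (A k₀ *ᵥ x₀) + b • (A k₀ *ᵥ y₀) = 0 → a = 0 ∧ b = 0
    · obtain ⟨k₀, x₀, y₀, hind⟩ := hcase
      exact hnotU (C16.caseI A hA hd P k₀ x₀ y₀ hind)
    · push_neg at hcase
      exact (C16.caseII A hA hd2 hbij.surjective P hcase).elim
end

section
/- Let P and Q be POVMs on ℂ^d with the same finite outcome set, and suppose Q is rank-one, i.e. rank(Q_e) ≤ 1 for every outcome e. If P ≻ Q (i.e. there is a finite Kraus family (A_k) with ∑_k A_kᴴ A_k = 1 and ∑_k A_kᴴ P_e A_k = Q_e for every e), then P is rank-one as well, and moreover Tr(P_e) = Tr(Q_e) for every outcome e. -/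
open Matrix BigOperators
open scoped ComplexOrder

/-- A POVM on `ℂ^d` with finite outcome set `E`. -/
def IsPOVM {d : ℕ} {E : Type} [Fintype E] (P : E → Matrix (Fin d) (Fin d) ℂ) : Prop :=
  (∀ e, (P e).PosSemidef) ∧ ∑ e, P e = 1

/-- `Cleaner P Q` (`P ≻ Q`): there is a quantum channel in the Heisenberg picture,
given by a finite Kraus family, mapping `P` to `Q`. -/
def Cleaner {d : ℕ} {E : Type} [Fintype E]
    (P Q : E → Matrix (Fin d) (Fin d) ℂ) : Prop :=
  ∃ (n : ℕ) (A : Fin n → Matrix (Fin d) (Fin d) ℂ),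
    ∑ k, (A k)ᴴ * A k = 1 ∧ ∀ e, ∑ k, (A k)ᴴ * P e * A k = Q e

namespace CleanAux

variable {d : ℕ}

/-- trace of a PSD matrix is nonnegative. -/
lemma trace_nonneg {A : Matrix (Fin d) (Fin d) ℂ} (hA : A.PosSemidef) : 0 ≤ A.trace := by
  obtain ⟨B, rfl⟩ : ∃ B : Matrix (Fin d) (Fin d) ℂ, A = Bᴴ * B := by
    open scoped MatrixOrder in exact CStarAlgebra.nonneg_iff_eq_star_mul_self.mp hA.nonneg
  rw [Matrix.trace]
  refine Finset.sum_nonneg fun i _ => ?_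
  rw [Matrix.diag_apply, Matrix.mul_apply]
  refine Finset.sum_nonneg fun k _ => ?_
  simpa [Matrix.conjTranspose_apply] using star_mul_self_nonneg (B k i)

/-- a PSD matrix with zero trace is zero. -/
lemma eq_zero_of_trace_eq_zero {A : Matrix (Fin d) (Fin d) ℂ} (hA : A.PosSemidef)
    (h : A.trace = 0) : A = 0 := by
  obtain ⟨B, rfl⟩ : ∃ B : Matrix (Fin d) (Fin d) ℂ, A = Bᴴ * B := by
    open scoped MatrixOrder in exact CStarAlgebra.nonneg_iff_eq_star_mul_self.mp hA.nonneg
  suffices hB : B = 0 by simp [hB]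
  have hterm : ∀ i k : Fin d, star (B k i) * B k i = 0 := by
    have h' : ∑ i : Fin d, ∑ k : Fin d, star (B k i) * B k i = 0 := by
      rw [← h, Matrix.trace]
      simp [Matrix.diag_apply, Matrix.mul_apply, Matrix.conjTranspose_apply]
    have h1 := (Finset.sum_eq_zero_iff_of_nonneg
      (fun i _ => Finset.sum_nonneg fun k _ => star_mul_self_nonneg (B k i))).mp h'
    intro i k
    have h2 := (Finset.sum_eq_zero_iff_of_nonneg
      (fun k _ => star_mul_self_nonneg (B k i))).mp (h1 i (Finset.mem_univ i))
    exact h2 k (Finset.mem_univ k)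
  ext k i
  have := hterm i k
  rw [Complex.star_def, mul_comm, Complex.mul_conj] at this
  exact_mod_cast Complex.normSq_eq_zero.mp (by exact_mod_cast this)

open scoped MatrixOrder in
/-- the trace of the product of two PSD matrices is nonnegative. -/
lemma trace_mul_nonneg {A B : Matrix (Fin d) (Fin d) ℂ}
    (hA : A.PosSemidef) (hB : B.PosSemidef) : 0 ≤ (A * B).trace := by
  classical
  have hs := CFC.sqrt_mul_sqrt_self A hA.nonneg
  have ht := CFC.sqrt_mul_sqrt_self B hB.nonneg
  set s := CFC.sqrt A with hsdef
  set t := CFC.sqrt B with htdef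
  have hsh : sᴴ = s := (CFC.sqrt_nonneg A).posSemidef.isHermitian
  have hth : tᴴ = t := (CFC.sqrt_nonneg B).posSemidef.isHermitian
  have key : (A * B).trace = ((t * s)ᴴ * (t * s)).trace := by
    have h0 : (t * s)ᴴ * (t * s) = s * B * s := by
      rw [Matrix.conjTranspose_mul, hsh, hth, ← ht]
      noncomm_ring
    rw [h0, Matrix.trace_mul_comm (s * B) s, ← Matrix.mul_assoc, hs]
  rw [key]
  exact trace_nonneg (Matrix.posSemidef_conjTranspose_mul_self _)

open scoped MatrixOrder in
/-- equality case: trace of the product of two PSD matrices is zero iff product is zero. -/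
lemma mul_eq_zero_of_trace_mul_eq_zero {A B : Matrix (Fin d) (Fin d) ℂ}
    (hA : A.PosSemidef) (hB : B.PosSemidef) (h : (A * B).trace = 0) : A * B = 0 := by
  classical
  have hs := CFC.sqrt_mul_sqrt_self A hA.nonneg
  have ht := CFC.sqrt_mul_sqrt_self B hB.nonneg
  set s := CFC.sqrt A with hsdef
  set t := CFC.sqrt B with htdef
  have hsh : sᴴ = s := (CFC.sqrt_nonneg A).posSemidef.isHermitian
  have hth : tᴴ = t := (CFC.sqrt_nonneg B).posSemidef.isHermitian
  have key : (A * B).trace = ((t * s)ᴴ * (t * s)).trace := by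
    have h0 : (t * s)ᴴ * (t * s) = s * B * s := by
      rw [Matrix.conjTranspose_mul, hsh, hth, ← ht]
      noncomm_ring
    rw [h0, Matrix.trace_mul_comm (s * B) s, ← Matrix.mul_assoc, hs]
  have hzero : (t * s)ᴴ * (t * s) = 0 := by
    apply eq_zero_of_trace_eq_zero (Matrix.posSemidef_conjTranspose_mul_self _)
    rw [← key, h]
  have hts : t * s = 0 := Matrix.conjTranspose_mul_self_eq_zero.mp hzero
  have hst : s * t = 0 := by
    have := congrArg Matrix.conjTranspose hts
    rwa [Matrix.conjTranspose_mul, hsh, hth, Matrix.conjTranspose_zero] at this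
  calc A * B = s * (s * t) * t := by rw [← hs, ← ht]; noncomm_ring
  _ = 0 := by rw [hst]; noncomm_ring

/-- a nonnegative real multiple of a PSD matrix is PSD. -/
lemma smul_posSemidef {A : Matrix (Fin d) (Fin d) ℂ} (hA : A.PosSemidef)
    {r : ℝ} (hr : 0 ≤ r) : ((r : ℂ) • A).PosSemidef := by
  constructor
  · unfold Matrix.IsHermitian
    rw [Matrix.conjTranspose_smul, hA.isHermitian.eq]
    congr 1
    simp [Complex.star_def, Complex.conj_ofReal]
  · intro x
    exact (hA.smul (a := (r : ℂ)) (by exact_mod_cast Complex.zero_le_real.mpr hr)).2 x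

/-- PSD matrix is dominated by its trace times the identity. -/
lemma smul_one_sub_posSemidef {A : Matrix (Fin d) (Fin d) ℂ} (hA : A.PosSemidef) :
    (A.trace • (1 : Matrix (Fin d) (Fin d) ℂ) - A).PosSemidef := by
  classical
  have hH := hA.isHermitian
  have hspec := hH.spectral_theorem
  simp only [Unitary.conjStarAlgAut_apply, Unitary.coe_star] at hspec
  set U : Matrix (Fin d) (Fin d) ℂ := (hH.eigenvectorUnitary : Matrix (Fin d) (Fin d) ℂ) with hUdef
  have hU1 : star U * U = 1 := Matrix.mem_unitaryGroup_iff'.mp hH.eigenvectorUnitary.2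
  have hU2 : U * star U = 1 := Matrix.mem_unitaryGroup_iff.mp hH.eigenvectorUnitary.2
  have htr : A.trace = ((∑ i, hH.eigenvalues i : ℝ) : ℂ) := by
    conv_lhs => rw [hspec]
    rw [Matrix.trace_mul_comm, ← Matrix.mul_assoc, hU1, Matrix.one_mul, Matrix.trace_diagonal]
    push_cast
    rfl
  set c : ℝ := ∑ i, hH.eigenvalues i with hcdef
  have hkey : A.trace • (1 : Matrix (Fin d) (Fin d) ℂ) - A
      = U * Matrix.diagonal (fun i => ((c - hH.eigenvalues i : ℝ) : ℂ)) * star U := by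
    have hdiag : Matrix.diagonal (fun i => ((c - hH.eigenvalues i : ℝ) : ℂ))
        = ((c : ℂ) • (1 : Matrix (Fin d) (Fin d) ℂ))
          - Matrix.diagonal (RCLike.ofReal ∘ hH.eigenvalues) := by
      ext i j
      by_cases hij : i = j <;>
        simp [hij, Matrix.diagonal_apply, Matrix.one_apply, Complex.ofReal_sub]
    rw [hdiag, Matrix.mul_sub, Matrix.sub_mul, ← hspec]
    congr 1
    rw [htr, Matrix.mul_smul, Matrix.smul_mul, Matrix.mul_one, hU2]
  rw [hkey]
  apply Matrix.PosSemidef.mul_mul_conjTranspose_same (B := U)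
  · apply Matrix.posSemidef_diagonal_iff.mpr
    intro i
    rw [Complex.zero_le_real, sub_nonneg, hcdef]
    exact Finset.single_le_sum (fun j _ => hA.eigenvalues_nonneg j) (Finset.mem_univ i)

/-- rank-one PSD matrices square to their trace times themselves. -/
lemma sq_eq_trace_smul {Q : Matrix (Fin d) (Fin d) ℂ} (hQ : Q.PosSemidef)
    (hr : Q.rank ≤ 1) : Q * Q = Q.trace • Q := by
  classical
  have hH := hQ.isHermitian
  have hspec := hH.spectral_theorem
  simp only [Unitary.conjStarAlgAut_apply, Unitary.coe_star] at hspec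
  set U : Matrix (Fin d) (Fin d) ℂ := (hH.eigenvectorUnitary : Matrix (Fin d) (Fin d) ℂ) with hUdef
  have hU1 : star U * U = 1 := Matrix.mem_unitaryGroup_iff'.mp hH.eigenvectorUnitary.2
  have htr : Q.trace = ((∑ i, hH.eigenvalues i : ℝ) : ℂ) := by
    conv_lhs => rw [hspec]
    rw [Matrix.trace_mul_comm, ← Matrix.mul_assoc, hU1, Matrix.one_mul, Matrix.trace_diagonal]
    push_cast
    rfl
  have hcard : Fintype.card {i // hH.eigenvalues i ≠ 0} ≤ 1 := by
    rw [← hH.rank_eq_card_non_zero_eigs]; exact hr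
  have hmul : ∀ i, (hH.eigenvalues i : ℂ) * (hH.eigenvalues i : ℂ)
      = Q.trace * (hH.eigenvalues i : ℂ) := by
    intro i
    by_cases hzi : hH.eigenvalues i = 0
    · simp [hzi]
    · have hz : ∀ j, j ≠ i → hH.eigenvalues j = 0 := by
        intro j hj
        by_contra hzj
        exact hj (congrArg Subtype.val (Fintype.card_le_one_iff.mp hcard ⟨j, hzj⟩ ⟨i, hzi⟩))
      have hsum : (∑ j, hH.eigenvalues j) = hH.eigenvalues i :=
        Finset.sum_eq_single_of_mem i (Finset.mem_univ i) (fun j _ hj => hz j hj)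
      rw [htr, hsum]
  set D := Matrix.diagonal (RCLike.ofReal ∘ hH.eigenvalues : Fin d → ℂ) with hDdef
  have hDD : D * D = Q.trace • D := by
    rw [hDdef, Matrix.diagonal_mul_diagonal]
    ext i j
    by_cases hij : i = j
    · subst hij
      simpa [Matrix.diagonal_apply, Function.comp] using hmul i
    · simp [Matrix.diagonal_apply, hij]
  have h2 : (U * D * star U) * (U * D * star U) = U * (D * D) * star U := by
    calc (U * D * star U) * (U * D * star U)
        = U * D * (star U * U) * D * star U := by noncomm_ring
    _ = U * (D * D) * star U := by rw [hU1]; noncomm_ring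
  conv_lhs => rw [hspec, h2, hDD]
  rw [Matrix.mul_smul, Matrix.smul_mul, ← hspec]

end CleanAux

/-- if `Q` is a rank-one POVM and `P ≻ Q`, then `P` is rank-one as well
and the traces of corresponding elements coincide. -/
theorem clean_povm_stmt18 (d : ℕ) (hd : 1 ≤ d) (E : Type) [Fintype E]
    (P Q : E → Matrix (Fin d) (Fin d) ℂ) (hP : IsPOVM P) (hQ : IsPOVM Q)
    (hQrank : ∀ e, (Q e).rank ≤ 1) (hPQ : Cleaner P Q) :
    (∀ e, (P e).rank ≤ 1) ∧ ∀ e, (P e).trace = (Q e).trace := by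
  classical
  obtain ⟨hPpsd, hPsum⟩ := hP
  obtain ⟨hQpsd, hQsum⟩ := hQ
  obtain ⟨n, A, hA1, hA2⟩ := hPQ
  have hσ : ∀ e, ∃ σ : Matrix (Fin d) (Fin d) ℂ, σ.PosSemidef ∧ σ.trace = 1 ∧
      (Q e * σ).trace = (Q e).trace := by
    intro e
    by_cases h0 : (Q e).trace = 0
    · have hQ0 : Q e = 0 := CleanAux.eq_zero_of_trace_eq_zero (hQpsd e) h0
      refine ⟨(((d : ℝ)⁻¹ : ℝ) : ℂ) • 1,
        CleanAux.smul_posSemidef Matrix.PosSemidef.one (by positivity), ?_, ?_⟩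
      · rw [Matrix.trace_smul, Matrix.trace_one, Fintype.card_fin, smul_eq_mul]
        have : ((d : ℕ) : ℂ) ≠ 0 := Nat.cast_ne_zero.mpr (by omega)
        push_cast
        field_simp
      · rw [hQ0, Matrix.zero_mul, Matrix.trace_zero]
    · set t := (Q e).trace with ht
      have htnn : 0 ≤ t := CleanAux.trace_nonneg (hQpsd e)
      have htre : t = ((t.re : ℝ) : ℂ) := Complex.eq_re_of_ofReal_le (by exact_mod_cast htnn)
      have htrene : t.re ≠ 0 := fun h => h0 (by rw [htre, h, Complex.ofReal_zero])
      refine ⟨((t.re⁻¹ : ℝ) : ℂ) • Q e,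
        CleanAux.smul_posSemidef (hQpsd e) (inv_nonneg.mpr (Complex.le_def.mp htnn).1), ?_, ?_⟩
      · rw [Matrix.trace_smul, smul_eq_mul, ← ht]
        rw [htre]
        push_cast
        rw [Complex.ofReal_re]
        field_simp
      · rw [Matrix.mul_smul, Matrix.trace_smul, smul_eq_mul,
          CleanAux.sq_eq_trace_smul (hQpsd e) (hQrank e), Matrix.trace_smul, smul_eq_mul, ← ht]
        rw [htre]
        push_cast
        rw [Complex.ofReal_re]
        field_simp
  choose σ hσ1 hσ2 hσ3 using hσ
  set ρ : E → Matrix (Fin d) (Fin d) ℂ := fun e => ∑ k, A k * σ e * (A k)ᴴ with hρdef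
  have hρpsd : ∀ e, (ρ e).PosSemidef := by
    intro e
    refine Finset.sum_induction _ _ (fun a b ha hb => ha.add hb) Matrix.PosSemidef.zero ?_
    intro k _
    exact (hσ1 e).mul_mul_conjTranspose_same (A k)
  have hρtr : ∀ e, (ρ e).trace = 1 := by
    intro e
    show (∑ k, A k * σ e * (A k)ᴴ).trace = 1
    rw [Matrix.trace_sum]
    have h1 : ∀ k : Fin n, (A k * σ e * (A k)ᴴ).trace = (σ e * ((A k)ᴴ * A k)).trace := by
      intro k
      have e1 : A k * σ e * (A k)ᴴ = A k * (σ e * (A k)ᴴ) := by noncomm_ring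
      rw [e1, Matrix.trace_mul_comm, Matrix.mul_assoc]
    simp_rw [h1]
    rw [← Matrix.trace_sum, ← Finset.mul_sum, hA1, Matrix.mul_one, hσ2]
  have key : ∀ e, (Q e).trace = (P e * ρ e).trace := by
    intro e
    rw [← hσ3 e, ← hA2 e, Matrix.sum_mul, Matrix.trace_sum]
    have h1 : ∀ k : Fin n, ((A k)ᴴ * P e * A k * σ e).trace
        = (P e * (A k * σ e * (A k)ᴴ)).trace := by
      intro k
      have e1 : (A k)ᴴ * P e * A k * σ e = (A k)ᴴ * (P e * (A k * σ e)) := by noncomm_ring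
      have e2 : P e * (A k * σ e) * (A k)ᴴ = P e * (A k * σ e * (A k)ᴴ) := by noncomm_ring
      rw [e1, Matrix.trace_mul_comm, e2]
    simp_rw [h1]
    rw [← Matrix.trace_sum, ← Finset.mul_sum]
  have hle : ∀ e, (Q e).trace ≤ (P e).trace := by
    intro e
    have h1 : 0 ≤ (((P e).trace • (1 : Matrix (Fin d) (Fin d) ℂ) - P e) * ρ e).trace :=
      CleanAux.trace_mul_nonneg (CleanAux.smul_one_sub_posSemidef (hPpsd e)) (hρpsd e)
    rw [Matrix.sub_mul, Matrix.trace_sub, Matrix.smul_mul, Matrix.one_mul, Matrix.trace_smul,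
      hρtr e, smul_eq_mul, mul_one, ← key e, sub_nonneg] at h1
    exact h1
  have hsum : ∑ e, (Q e).trace = ∑ e, (P e).trace := by
    rw [← Matrix.trace_sum, ← Matrix.trace_sum, hPsum, hQsum]
  have htr_eq : ∀ e, (P e).trace = (Q e).trace := by
    have h2 := (Finset.sum_eq_sum_iff_of_le (fun e (_ : e ∈ Finset.univ) => hle e)).mp hsum
    exact fun e => (h2 e (Finset.mem_univ e)).symm
  refine ⟨?_, htr_eq⟩
  intro e
  by_cases hc0 : (P e).trace = 0
  · rw [CleanAux.eq_zero_of_trace_eq_zero (hPpsd e) hc0]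
    rw [Matrix.rank_zero]
    omega
  · set c := (P e).trace with hc
    have hz : ((c • (1 : Matrix (Fin d) (Fin d) ℂ) - P e) * ρ e).trace = 0 := by
      rw [Matrix.sub_mul, Matrix.trace_sub, Matrix.smul_mul, Matrix.one_mul, Matrix.trace_smul,
        hρtr e, smul_eq_mul, mul_one, ← key e, hc, htr_eq e, sub_self]
    have hprod : (c • (1 : Matrix (Fin d) (Fin d) ℂ) - P e) * ρ e = 0 :=
      CleanAux.mul_eq_zero_of_trace_mul_eq_zero
        (by rw [hc]; exact CleanAux.smul_one_sub_posSemidef (hPpsd e)) (hρpsd e) hz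
    have hPρ : P e * ρ e = c • ρ e := by
      rw [Matrix.sub_mul, Matrix.smul_mul, Matrix.one_mul, sub_eq_zero] at hprod
      exact hprod.symm
    have hρne : ρ e ≠ 0 := by
      intro h
      have h2 := hρtr e
      rw [h, Matrix.trace_zero] at h2
      exact zero_ne_one h2
    obtain ⟨i0, j0, hij⟩ : ∃ i j, ρ e i j ≠ 0 := by
      by_contra hcon
      push_neg at hcon
      exact hρne (by ext i j; simpa using hcon i j)
    set w : Fin d → ℂ := fun i => ρ e i j0 with hw
    have hwv : ∀ i, ∑ k, P e i k * w k = c * w i := by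
      intro i
      have h3 : (P e * ρ e) i j0 = (c • ρ e) i j0 := by rw [hPρ]
      simpa [Matrix.mul_apply, Matrix.smul_apply, hw] using h3
    have hwne : w ≠ 0 := by
      intro h
      exact hij (by simpa [hw] using congrFun h i0)
    set β : ℂ := dotProduct (star w) w with hβdef
    have hβ : β ≠ 0 := by
      intro h
      exact hwne (dotProduct_star_self_eq_zero.mp h)
    have hβstar : star β = β := by
      rw [hβdef]
      simp [dotProduct, mul_comm]
    have hcnn : (0 : ℂ) ≤ c := by rw [hc]; exact CleanAux.trace_nonneg (hPpsd e)
    have hcstar : star c = c := by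
      have hcre : c = ((c.re : ℝ) : ℂ) := Complex.eq_re_of_ofReal_le (by exact_mod_cast hcnn)
      rw [hcre, Complex.star_def, Complex.conj_ofReal]
    set W : Matrix (Fin d) (Fin d) ℂ := Matrix.of (fun i j => w i * star (w j)) with hW
    have hWH : Wᴴ = W := by
      ext i j
      simp [hW, Matrix.conjTranspose_apply, mul_comm]
    have hWW : W * W = β • W := by
      ext i j
      simp only [hW, Matrix.mul_apply, Matrix.smul_apply, Matrix.of_apply, smul_eq_mul, hβdef,
        dotProduct, Pi.star_apply]
      calc ∑ k, w i * star (w k) * (w k * star (w j))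
          = ∑ k, star (w k) * w k * (w i * star (w j)) := by
            apply Finset.sum_congr rfl; intros; ring
        _ = (∑ k, star (w k) * w k) * (w i * star (w j)) := by rw [Finset.sum_mul]
        _ = _ := by ring
    have hPW : P e * W = c • W := by
      ext i j
      simp only [hW, Matrix.mul_apply, Matrix.smul_apply, Matrix.of_apply, smul_eq_mul]
      calc ∑ k, P e i k * (w k * star (w j))
          = (∑ k, P e i k * w k) * star (w j) := by
            rw [Finset.sum_mul]; apply Finset.sum_congr rfl; intros; ring
        _ = c * (w i * star (w j)) := by rw [hwv i]; ring
    have hWP : W * P e = c • W := by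
      have h5 := congrArg Matrix.conjTranspose hPW
      rw [Matrix.conjTranspose_mul, hWH, (hPpsd e).isHermitian.eq, Matrix.conjTranspose_smul,
        hWH, hcstar] at h5
      exact h5
    set q : Matrix (Fin d) (Fin d) ℂ := β⁻¹ • W with hq
    have hqH : qᴴ = q := by
      rw [hq, Matrix.conjTranspose_smul, hWH]
      congr 1
      rw [star_inv₀, hβstar]
    have hqq : q * q = q := by
      rw [hq, Matrix.smul_mul, Matrix.mul_smul, hWW, smul_smul, smul_smul]
      congr 1
      field_simp
    have hqP : q * P e = c • q := by
      rw [hq, Matrix.smul_mul, hWP, smul_comm]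
    have hPq' : P e * q = c • q := by
      rw [hq, Matrix.mul_smul, hPW, smul_comm]
    have hRpsd : ((1 - q)ᴴ * P e * (1 - q)).PosSemidef :=
      (hPpsd e).conjTranspose_mul_mul_same _
    have hR : (1 - q)ᴴ * P e * (1 - q) = P e - c • q := by
      rw [Matrix.conjTranspose_sub, Matrix.conjTranspose_one, hqH]
      have e1 : (1 - q) * P e * (1 - q)
          = P e - q * P e - (P e * q - q * (P e * q)) := by noncomm_ring
      rw [e1, hPq', hqP, Matrix.mul_smul, hqq]
      abel
    have htrW : W.trace = β := by
      rw [hW, hβdef, Matrix.trace]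
      simp only [Matrix.diag_apply, Matrix.of_apply, dotProduct, Pi.star_apply]
      exact Finset.sum_congr rfl (fun i _ => mul_comm _ _)
    have hqtr : q.trace = 1 := by
      rw [hq, Matrix.trace_smul, htrW, smul_eq_mul, inv_mul_cancel₀ hβ]
    have htrR : (P e - c • q).trace = 0 := by
      rw [Matrix.trace_sub, Matrix.trace_smul, hqtr, smul_eq_mul, mul_one, ← hc, sub_self]
    have hR0 : P e = c • q := by
      have := CleanAux.eq_zero_of_trace_eq_zero (hR ▸ hRpsd) htrR
      exact sub_eq_zero.mp this
    set X : Matrix (Fin d) (Fin 1) ℂ := Matrix.of (fun i _ => c * β⁻¹ * w i) with hX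
    set Y : Matrix (Fin 1) (Fin d) ℂ := Matrix.of (fun _ j => star (w j)) with hY
    have hXY : P e = X * Y := by
      rw [hR0, hq]
      ext i j
      simp [hX, hY, hW, Matrix.mul_apply, Matrix.smul_apply, Fin.sum_univ_one]
      ring
    calc (P e).rank = (X * Y).rank := by rw [← hXY]
      _ ≤ X.rank := Matrix.rank_mul_le_left X Y
      _ ≤ Fintype.card (Fin 1) := Matrix.rank_le_card_width X
      _ = 1 := by simp
end

section
/- Rank-one POVMs are clean, and cleaner-than for a rank-one target forces unitary equivalence: let P and Q be POVMs on ℂ^d with the same finite outcome set, and suppose Q is rank-one, i.e. rank(Q_e) ≤ 1 for every outcome e. Then P ≻ Q if and only if P and Q are unitarily equivalent, i.e. if and only if there exists a unitary d×d matrix U with Q_e = U P_e Uᴴ for every outcome e. -/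
open Matrix BigOperators
open scoped ComplexOrder

namespace CleanPOVM

variable {m : Type*} [Fintype m]

lemma sum_mulVec {ι : Type*} (s : Finset ι) (M : ι → Matrix m m ℂ) (v : m → ℂ) :
    (∑ i ∈ s, M i) *ᵥ v = ∑ i ∈ s, M i *ᵥ v := by
  ext j
  simp [mulVec, dotProduct, Matrix.sum_apply, Finset.sum_mul]
  rw [Finset.sum_comm]

lemma dot_sum {ι : Type*} (s : Finset ι) (v : m → ℂ) (f : ι → m → ℂ) :
    v ⬝ᵥ (∑ i ∈ s, f i) = ∑ i ∈ s, v ⬝ᵥ f i := by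
  simp [dotProduct, Finset.sum_apply, Finset.mul_sum]
  rw [Finset.sum_comm]

lemma conj_dot (a x : m → ℂ) : star x ⬝ᵥ a = (starRingEnd ℂ) (star a ⬝ᵥ x) := by
  simp [dotProduct, map_sum, mul_comm]

lemma vmv_mulVec (a b x : m → ℂ) :
    vecMulVec a (star b) *ᵥ x = (star b ⬝ᵥ x) • a := by
  ext j
  simp [mulVec, dotProduct, vecMulVec_apply, Finset.sum_mul, Finset.mul_sum, mul_comm, mul_left_comm]

lemma vmv_mul_vmv (a b c e : m → ℂ) :
    vecMulVec a (star b) * vecMulVec c (star e) = (star b ⬝ᵥ c) • vecMulVec a (star e) := by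
  ext i j
  simp [mul_apply, vecMulVec_apply, dotProduct, Finset.sum_mul, Finset.mul_sum]
  apply Finset.sum_congr rfl
  intro k _
  ring

lemma trace_vmv (a b : m → ℂ) : (vecMulVec a (star b)).trace = star b ⬝ᵥ a := by
  simp [Matrix.trace, Matrix.diag, vecMulVec_apply, dotProduct, mul_comm]

lemma ct_vmv (a b : m → ℂ) : (vecMulVec a (star b))ᴴ = vecMulVec b (star a) := by
  ext i j
  simp [conjTranspose_apply, vecMulVec_apply, mul_comm]

lemma conj_sandwich_vmv (M : Matrix m m ℂ) (a : m → ℂ) :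
    Mᴴ * vecMulVec a (star a) * M = vecMulVec (Mᴴ *ᵥ a) (star (Mᴴ *ᵥ a)) := by
  ext i j
  simp only [mul_apply, vecMulVec_apply, conjTranspose_apply, mulVec, dotProduct,
    Pi.star_apply, star_apply, Finset.sum_mul, Finset.mul_sum, star_sum, star_mul']
  apply Finset.sum_congr rfl
  intro k _
  apply Finset.sum_congr rfl
  intro l _
  simp only [star_star]
  ring

/-- norm-squared as a real number -/
noncomputable def nsq (v : m → ℂ) : ℝ := ∑ i, Complex.normSq (v i)

lemma dot_star_self (v : m → ℂ) : star v ⬝ᵥ v = (nsq v : ℂ) := by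
  simp [dotProduct, nsq, Complex.normSq_eq_conj_mul_self]

lemma nsq_nonneg (v : m → ℂ) : 0 ≤ nsq v :=
  Finset.sum_nonneg fun i _ => Complex.normSq_nonneg _

lemma nsq_eq_zero {v : m → ℂ} (h : nsq v = 0) : v = 0 := by
  have := dotProduct_star_self_eq_zero (v := v)
  rw [dot_star_self, h] at this
  exact this.mp (by norm_num)


lemma psd_decomp {d : ℕ} {M : Matrix (Fin d) (Fin d) ℂ} (hM : M.PosSemidef) (i0 : Fin d)
    (h0 : ∀ i, i ≠ i0 → hM.1.eigenvalues i = 0) :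
    ∃ v : Fin d → ℂ, M = vecMulVec v (star v) ∧ star v ⬝ᵥ v = (hM.1.eigenvalues i0 : ℂ) := by
  have herm := hM.1
  set U : Matrix (Fin d) (Fin d) ℂ := (hM.1.eigenvectorUnitary : Matrix (Fin d) (Fin d) ℂ) with hUdef
  set lam := hM.1.eigenvalues with hlam
  have hnon : 0 ≤ lam i0 := hM.eigenvalues_nonneg i0
  have h1 : star U * U = 1 := Matrix.mem_unitaryGroup_iff'.mp (hM.1.eigenvectorUnitary).2
  set c : ℂ := (Real.sqrt (lam i0) : ℂ) with hc
  have hcc : c * c = (lam i0 : ℂ) := by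
    rw [hc]
    norm_cast
    exact Real.mul_self_sqrt hnon
  refine ⟨fun j => c * U j i0, ?_, ?_⟩
  · ext j l
    conv_lhs => rw [hM.1.spectral_theorem, Unitary.conjStarAlgAut_apply]
    simp only [mul_apply, Matrix.star_apply, Function.comp_apply, diagonal_apply, ite_mul,
      zero_mul, mul_ite, mul_zero, Finset.sum_ite_eq, Finset.sum_ite_eq', Finset.mem_univ,
      if_true]
    have hco : ∀ x : ℝ, (RCLike.ofReal x : ℂ) = (x : ℂ) := fun _ => rfl
    rw [Finset.sum_eq_single i0]
    · simp only [vecMulVec_apply, Pi.star_apply, star_mul', hco, ← hlam, hUdef]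
      rw [← hcc]
      simp only [hc, Complex.star_def, Complex.conj_ofReal]
      ring
    · intro p _ hp
      simp only [hco, ← hlam, h0 p hp]
      simp
    · intro h; exact absurd (Finset.mem_univ i0) h
  · have hcol : (∑ j, star (U j i0) * U j i0 : ℂ) = 1 := by
      have h2 : (star U * U) i0 i0 = (1 : Matrix (Fin d) (Fin d) ℂ) i0 i0 := by rw [h1]
      simpa [mul_apply, Matrix.star_apply, one_apply] using h2
    have : star (fun j => c * U j i0) ⬝ᵥ (fun j => c * U j i0)
        = (c * c) * ∑ j, star (U j i0) * U j i0 := by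
      simp only [dotProduct, Pi.star_apply, star_mul', Finset.mul_sum]
      apply Finset.sum_congr rfl
      intro j _
      have : star c = c := by rw [hc]; exact Complex.conj_ofReal _
      rw [this]
      ring
    rw [this, hcol, hcc, mul_one]

lemma exists_i0 {d : ℕ} (hd : 1 ≤ d) (f : Fin d → ℝ) (h : Fintype.card {i // f i ≠ 0} ≤ 1) :
    ∃ i0, ∀ i, i ≠ i0 → f i = 0 := by
  by_cases h1 : ∃ j, f j ≠ 0
  · obtain ⟨j, hj⟩ := h1
    refine ⟨j, fun i hi => ?_⟩
    by_contra hfi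
    have hne : (⟨i, hfi⟩ : {i // f i ≠ 0}) ≠ ⟨j, hj⟩ := by simpa using hi
    have : 1 < Fintype.card {i // f i ≠ 0} := Fintype.one_lt_card_iff.mpr ⟨_, _, hne⟩
    omega
  · push_neg at h1
    exact ⟨⟨0, hd⟩, fun i _ => h1 i⟩

/-- Cauchy-Schwarz for unit vectors wrt `star ⬝ᵥ`, with the equality case. -/
lemma unit_cs {n : ℕ} (u v : Fin n → ℂ) (hu : star u ⬝ᵥ u = 1) (hv : star v ⬝ᵥ v = 1) :
    Complex.normSq (star u ⬝ᵥ v) ≤ 1 ∧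
      (Complex.normSq (star u ⬝ᵥ v) = 1 → v = (star u ⬝ᵥ v) • u) := by
  set cc : ℂ := star u ⬝ᵥ v with hcdef
  have hr : star (v - cc • u) ⬝ᵥ (v - cc • u) = 1 - (Complex.normSq cc : ℂ) := by
    have h1 : star v ⬝ᵥ u = (starRingEnd ℂ) cc := conj_dot u v
    simp only [star_sub, star_smul, sub_dotProduct, dotProduct_sub, smul_dotProduct,
      dotProduct_smul, hv, hu, h1, smul_eq_mul, RCLike.star_def]
    rw [← hcdef, Complex.normSq_eq_conj_mul_self]
    ring
  rw [dot_star_self] at hr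
  have h0 : nsq (v - cc • u) = 1 - Complex.normSq cc := by
    have := hr
    exact_mod_cast this
  constructor
  · nlinarith [nsq_nonneg (v - cc • u)]
  · intro he
    have : nsq (v - cc • u) = 0 := by rw [h0, he]; ring
    have := nsq_eq_zero this
    have := sub_eq_zero.mp this
    exact this

open Complex in
/-- canonical phase of a nonzero vector -/
noncomputable def phase {n : ℕ} (v : Fin n → ℂ) : ℂ :=
  if h : v = 0 then 1 else
    v ((Finset.univ.filter fun k => v k ≠ 0).min' (by
      obtain ⟨k, hk⟩ := Function.ne_iff.mp h
      exact ⟨k, Finset.mem_filter.mpr ⟨Finset.mem_univ _, hk⟩⟩))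
    / (‖v ((Finset.univ.filter fun k => v k ≠ 0).min' (by
      obtain ⟨k, hk⟩ := Function.ne_iff.mp h
      exact ⟨k, Finset.mem_filter.mpr ⟨Finset.mem_univ _, hk⟩⟩))‖ : ℂ)

lemma phase_unit {n : ℕ} {v : Fin n → ℂ} (h : v ≠ 0) :
    (starRingEnd ℂ) (phase v) * phase v = 1 := by
  rw [phase, dif_neg h]
  set k := (Finset.univ.filter fun k => v k ≠ 0).min' _ with hk
  have hvk : v k ≠ 0 := by
    have : k ∈ Finset.univ.filter fun k => v k ≠ 0 := Finset.min'_mem _ _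
    exact (Finset.mem_filter.mp this).2
  have habs : ((‖v k‖ : ℝ) : ℂ) ≠ 0 := by
    simpa using hvk
  rw [map_div₀, Complex.conj_ofReal]
  rw [div_mul_div_comm, ← Complex.normSq_eq_conj_mul_self]
  rw [Complex.normSq_eq_norm_sq]
  field_simp
  norm_cast


lemma phase_smul {n : ℕ} {v : Fin n → ℂ} (h : v ≠ 0) {c : ℂ}
    (hc : (starRingEnd ℂ) c * c = 1) : phase (c • v) = c * phase v := by
  have hc0 : c ≠ 0 := by rintro rfl; simp at hc
  have hcv : c • v ≠ 0 := smul_ne_zero hc0 h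
  have habs : ‖c‖ = 1 := by
    have h1 : (Complex.normSq c : ℂ) = 1 := by
      rw [← Complex.normSq_eq_conj_mul_self] at hc; exact_mod_cast hc
    have h2 : Complex.normSq c = 1 := by exact_mod_cast h1
    have := Complex.sq_norm c
    nlinarith [norm_nonneg c]
  have hset : (Finset.univ.filter fun k => (c • v) k ≠ 0)
      = (Finset.univ.filter fun k => v k ≠ 0) := by
    ext k
    simp [Pi.smul_apply, smul_eq_mul, mul_ne_zero_iff, hc0]
  rw [phase, dif_neg hcv, phase, dif_neg h]
  have hmin : ((Finset.univ.filter fun k => (c • v) k ≠ 0).min' (by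
      obtain ⟨k, hk⟩ := Function.ne_iff.mp hcv
      exact ⟨k, Finset.mem_filter.mpr ⟨Finset.mem_univ _, hk⟩⟩))
      = ((Finset.univ.filter fun k => v k ≠ 0).min' (by
      obtain ⟨k, hk⟩ := Function.ne_iff.mp h
      exact ⟨k, Finset.mem_filter.mpr ⟨Finset.mem_univ _, hk⟩⟩)) := by
    congr 1
  rw [hmin]
  set k := (Finset.univ.filter fun k => v k ≠ 0).min' _ with hkdef
  have h5 : (c • v) k = c * v k := rfl
  have habs2 : ‖c * v k‖ = ‖v k‖ := by
    rw [norm_mul, habs, one_mul]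
  rw [h5, habs2, mul_div_assoc]

/-- each member of a finite family of rank-one psd matrices summing to a rank-one
psd matrix is a multiple of the target vector -/
lemma sum_outer_rankone {d n : ℕ} (w : Fin n → Fin d → ℂ) (ψ : Fin d → ℂ)
    (h : ∑ k, vecMulVec (w k) (star (w k)) = vecMulVec ψ (star ψ)) :
    ∀ k, ∃ μ : ℂ, w k = μ • ψ := by
  have hq : ∀ x : Fin d → ℂ, star ψ ⬝ᵥ x = 0 → ∀ k, star (w k) ⬝ᵥ x = 0 := by
    intro x hx
    have h1 := congrArg (fun M => star x ⬝ᵥ (M *ᵥ x)) h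
    simp only [sum_mulVec, vmv_mulVec, dot_sum] at h1
    have h2 : ∀ (a : Fin d → ℂ), star x ⬝ᵥ ((star a ⬝ᵥ x) • a)
        = (Complex.normSq (star a ⬝ᵥ x) : ℂ) := by
      intro a
      rw [dotProduct_smul, smul_eq_mul, conj_dot a x, mul_comm, Complex.normSq_eq_conj_mul_self]
    simp only [h2] at h1
    rw [hx] at h1
    simp only [map_zero] at h1
    have h3 : ∑ k, Complex.normSq (star (w k) ⬝ᵥ x) = 0 := by exact_mod_cast h1
    intro k
    have h4 := (Finset.sum_eq_zero_iff_of_nonneg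
      (fun i _ => Complex.normSq_nonneg (star (w i) ⬝ᵥ x))).mp h3 k (Finset.mem_univ k)
    exact Complex.normSq_eq_zero.mp h4
  intro k
  by_cases hψ0 : ψ = 0
  · refine ⟨0, ?_⟩
    have h5 : star ψ ⬝ᵥ (w k) = 0 := by rw [hψ0]; simp
    have h6 := hq (w k) h5 k
    rw [dotProduct_star_self_eq_zero] at h6
    simp [h6]
  · have hs : star ψ ⬝ᵥ ψ ≠ 0 := fun hc => hψ0 (dotProduct_star_self_eq_zero.mp hc)
    set μ : ℂ := (star ψ ⬝ᵥ w k) / (star ψ ⬝ᵥ ψ) with hμdef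
    set x : Fin d → ℂ := w k - μ • ψ with hxdef
    have hx : star ψ ⬝ᵥ x = 0 := by
      rw [hxdef, dotProduct_sub, dotProduct_smul, smul_eq_mul, hμdef]
      field_simp
      ring
    have h7 := hq x hx k
    have h8 : star x ⬝ᵥ x = 0 := by
      rw [hxdef, star_sub, star_smul, sub_dotProduct, smul_dotProduct, smul_eq_mul]
      rw [← hxdef, h7, hx]
      simp
    have h9 := dotProduct_star_self_eq_zero.mp h8
    exact ⟨μ, by rwa [hxdef, sub_eq_zero] at h9⟩

lemma frame_sum {d : ℕ} {E : Type} [Fintype E] (v : E → Fin d → ℂ)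
    (h : ∑ e, vecMulVec (v e) (star (v e)) = 1) :
    ∑ e, ∑ f, Complex.normSq (star (v e) ⬝ᵥ v f) = (d : ℝ) := by
  have key : ((d : ℝ) : ℂ) = ∑ e, ∑ f, (Complex.normSq (star (v e) ⬝ᵥ v f) : ℂ) := by
    calc ((d : ℝ) : ℂ) = (1 : Matrix (Fin d) (Fin d) ℂ).trace := by
          rw [trace_one]; simp
      _ = ((∑ e, vecMulVec (v e) (star (v e))) * (∑ f, vecMulVec (v f) (star (v f)))).trace := by
          rw [h, one_mul]
      _ = ∑ e, ∑ f, (vecMulVec (v e) (star (v e)) * vecMulVec (v f) (star (v f))).trace := by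
          rw [Finset.sum_mul_sum, trace_sum]
          exact Finset.sum_congr rfl fun e _ => trace_sum _ _
      _ = ∑ e, ∑ f, (Complex.normSq (star (v e) ⬝ᵥ v f) : ℂ) := by
          refine Finset.sum_congr rfl fun e _ => Finset.sum_congr rfl fun f _ => ?_
          rw [vmv_mul_vmv, trace_smul, trace_vmv, smul_eq_mul, conj_dot (v e) (v f),
            mul_comm, Complex.normSq_eq_conj_mul_self]
  exact_mod_cast key.symm



lemma psd_sum {d : ℕ} {ι : Type*} (s : Finset ι) (M : ι → Matrix (Fin d) (Fin d) ℂ)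
    (h : ∀ i ∈ s, (M i).PosSemidef) : (∑ i ∈ s, M i).PosSemidef := by
  classical
  induction s using Finset.induction with
  | empty => simpa using Matrix.PosSemidef.zero
  | insert _ _ hnot ih =>
    rw [Finset.sum_insert hnot]
    exact Matrix.PosSemidef.add (h _ (Finset.mem_insert_self _ _))
      (ih fun i hi => h i (Finset.mem_insert_of_mem hi))

lemma smul_one_diag {d : ℕ} (c : ℂ) :
    c • (1 : Matrix (Fin d) (Fin d) ℂ) = diagonal (fun _ => c) := by
  ext i j
  by_cases h : i = j <;> simp [Matrix.one_apply, diagonal_apply, h]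

lemma stepA {d n : ℕ} (hd : 1 ≤ d) {E : Type} [Fintype E]
    (P Q : E → Matrix (Fin d) (Fin d) ℂ) (hPpsd : ∀ e, (P e).PosSemidef)
    (hPsum : ∑ e, P e = 1) (hQsum : ∑ e, Q e = 1)
    (A : Fin n → Matrix (Fin d) (Fin d) ℂ) (hA1 : ∑ k, (A k)ᴴ * A k = 1)
    (hA2 : ∀ e, ∑ k, (A k)ᴴ * P e * A k = Q e)
    (ψ : E → Fin d → ℂ) (hψ : ∀ e, Q e = vecMulVec (ψ e) (star (ψ e))) :
    ∀ e, ∃ χ : Fin d → ℂ, P e = vecMulVec χ (star χ) ∧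
      star χ ⬝ᵥ χ = star (ψ e) ⬝ᵥ ψ e := by
  -- eigenvalues
  set lam : E → Fin d → ℝ := fun e => (hPpsd e).1.eigenvalues with hlam
  have hlamnn : ∀ e i, 0 ≤ lam e i := fun e i => (hPpsd e).eigenvalues_nonneg i
  -- argmax
  have hmax : ∀ e : E, ∃ i1 : Fin d, ∀ i, lam e i ≤ lam e i1 := by
    intro e
    obtain ⟨i1, _, hi1⟩ := Finset.exists_max_image Finset.univ (lam e) ⟨⟨0, hd⟩, Finset.mem_univ _⟩
    exact ⟨i1, fun i => hi1 i (Finset.mem_univ i)⟩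
  choose i1 hi1 using hmax
  -- the key upper bound : nsq (ψ e) ≤ lam e (i1 e)
  have hub : ∀ e, nsq (ψ e) ≤ lam e (i1 e) := by
    intro e
    set c : ℂ := ((lam e (i1 e) : ℝ) : ℂ) with hcdef
    -- c • 1 - P e is psd
    have hP1 : (c • 1 - P e).PosSemidef := by
      have hUU : (hPpsd e).1.eigenvectorUnitary.1 * star (hPpsd e).1.eigenvectorUnitary.1 = 1 :=
        Matrix.mem_unitaryGroup_iff.mp ((hPpsd e).1.eigenvectorUnitary).2
      have hdiag : (diagonal (fun i => ((lam e (i1 e) - lam e i : ℝ) : ℂ))).PosSemidef := by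
        rw [posSemidef_diagonal_iff]
        intro i
        rw [Complex.zero_le_real]
        linarith [hi1 e i]
      have key : c • 1 - P e = (hPpsd e).1.eigenvectorUnitary.1 *
          diagonal (fun i => ((lam e (i1 e) - lam e i : ℝ) : ℂ)) *
          ((hPpsd e).1.eigenvectorUnitary.1)ᴴ := by
        have hsp := (hPpsd e).1.spectral_theorem
        rw [Unitary.conjStarAlgAut_apply] at hsp
        have hco : ∀ x : ℝ, (RCLike.ofReal x : ℂ) = (x : ℂ) := fun _ => rfl
        have hdd : diagonal (fun i => ((lam e (i1 e) - lam e i : ℝ) : ℂ))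
            = diagonal (fun _ => c) - diagonal (RCLike.ofReal ∘ lam e) := by
          rw [diagonal_sub]
          congr 1
          funext i
          simp only [Function.comp_apply, hco, hcdef]
          push_cast
          ring
        rw [hdd, Matrix.mul_sub, Matrix.sub_mul]
        have h1 : (hPpsd e).1.eigenvectorUnitary.1 * diagonal (fun _ => c) *
            ((hPpsd e).1.eigenvectorUnitary.1)ᴴ = c • 1 := by
          rw [← smul_one_diag, Matrix.mul_smul, Matrix.mul_one, Matrix.smul_mul,
            ← Matrix.star_eq_conjTranspose, hUU]
        rw [h1, ← Matrix.star_eq_conjTranspose, ← hsp]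
      rw [key]
      exact hdiag.mul_mul_conjTranspose_same _
    -- transport through the channel
    have hQ1 : (c • 1 - Q e).PosSemidef := by
      have key : c • 1 - Q e = ∑ k, (A k)ᴴ * (c • 1 - P e) * A k := by
        have h2 : ∀ k : Fin n, (A k)ᴴ * (c • 1 - P e) * A k
            = c • ((A k)ᴴ * A k) - (A k)ᴴ * P e * A k := by
          intro k
          rw [Matrix.mul_sub, Matrix.sub_mul, Matrix.mul_smul, Matrix.mul_one, Matrix.smul_mul]
        rw [Finset.sum_congr rfl fun k _ => h2 k, Finset.sum_sub_distrib, ← Finset.smul_sum,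
          hA1, hA2 e]
      rw [key]
      exact psd_sum _ _ fun k _ => by
        simpa [Matrix.star_eq_conjTranspose] using
          (hP1.mul_mul_conjTranspose_same ((A k)ᴴ))
    -- evaluate at ψ e
    have hev := hQ1.dotProduct_mulVec_nonneg (ψ e)
    have hmv : (c • 1 - Q e) *ᵥ ψ e = c • ψ e - ((nsq (ψ e) : ℝ) : ℂ) • ψ e := by
      rw [Matrix.sub_mulVec, Matrix.smul_mulVec, Matrix.one_mulVec, hψ e, vmv_mulVec,
        dot_star_self]
    rw [hmv] at hev
    have hev2 : star (ψ e) ⬝ᵥ (c • ψ e - ((nsq (ψ e) : ℝ) : ℂ) • ψ e)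
        = (((lam e (i1 e) - nsq (ψ e)) * nsq (ψ e) : ℝ) : ℂ) := by
      rw [dotProduct_sub, dotProduct_smul, dotProduct_smul, dot_star_self, hcdef]
      simp only [smul_eq_mul]
      push_cast
      ring
    rw [hev2, Complex.zero_le_real] at hev
    rcases eq_or_lt_of_le (nsq_nonneg (ψ e)) with hz | hpos
    · rw [← hz]; exact hlamnn e (i1 e)
    · nlinarith
  -- trace identities
  have htrQ : ∑ e, nsq (ψ e) = (d : ℝ) := by
    have c1 : ∑ e, ((nsq (ψ e) : ℝ) : ℂ) = ((d : ℝ) : ℂ) := by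
      calc ∑ e, ((nsq (ψ e) : ℝ) : ℂ) = ∑ e, (Q e).trace := by
            refine Finset.sum_congr rfl fun e _ => ?_
            rw [hψ e, trace_vmv, dot_star_self]
        _ = (∑ e, Q e).trace := (trace_sum _ _).symm
        _ = ((d : ℝ) : ℂ) := by rw [hQsum, trace_one]; simp
    exact_mod_cast c1
  have htrP : ∑ e, (∑ i, lam e i) = (d : ℝ) := by
    have c1 : ∑ e, ((∑ i, lam e i : ℝ) : ℂ) = ((d : ℝ) : ℂ) := by
      calc ∑ e, ((∑ i, lam e i : ℝ) : ℂ) = ∑ e, (P e).trace := by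
            refine Finset.sum_congr rfl fun e _ => ?_
            have hsp := (hPpsd e).1.spectral_theorem
            rw [Unitary.conjStarAlgAut_apply] at hsp
            have : (P e).trace = (diagonal (RCLike.ofReal ∘ lam e) : Matrix (Fin d) (Fin d) ℂ).trace := by
              conv_lhs => rw [hsp]
              rw [Matrix.trace_mul_cycle]
              have hUU : star (hPpsd e).1.eigenvectorUnitary.1 * (hPpsd e).1.eigenvectorUnitary.1 = 1 :=
                Matrix.mem_unitaryGroup_iff'.mp ((hPpsd e).1.eigenvectorUnitary).2
              rw [hUU, Matrix.one_mul]
            rw [this, trace_diagonal]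
            have hco : ∀ x : ℝ, (RCLike.ofReal x : ℂ) = (x : ℂ) := fun _ => rfl
            simp only [Function.comp_apply, hco]
            push_cast
            rfl
        _ = (∑ e, P e).trace := (trace_sum _ _).symm
        _ = ((d : ℝ) : ℂ) := by rw [hPsum, trace_one]; simp
    exact_mod_cast c1
  -- squeeze
  have hle : ∀ e, nsq (ψ e) ≤ ∑ i, lam e i := by
    intro e
    calc nsq (ψ e) ≤ lam e (i1 e) := hub e
      _ ≤ ∑ i, lam e i := Finset.single_le_sum (fun i _ => hlamnn e i) (Finset.mem_univ _)
  have hslack : ∑ e, (∑ i, lam e i - nsq (ψ e)) = 0 := by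
    rw [Finset.sum_sub_distrib, htrP, htrQ]; ring
  have heq : ∀ e, ∑ i, lam e i = nsq (ψ e) := by
    intro e
    have := (Finset.sum_eq_zero_iff_of_nonneg
      (fun e _ => sub_nonneg.mpr (hle e))).mp hslack e (Finset.mem_univ e)
    linarith
  intro e
  -- all other eigenvalues vanish
  have hzero : ∀ i, i ≠ i1 e → lam e i = 0 := by
    intro i hi
    have h1 : lam e (i1 e) = ∑ j, lam e j := by
      have := heq e
      have := hub e
      have := Finset.single_le_sum (fun j (_ : j ∈ Finset.univ) => hlamnn e j)
        (Finset.mem_univ (i1 e))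
      linarith
    have h2 : ∑ j ∈ Finset.univ.erase (i1 e), lam e j = 0 := by
      have := Finset.add_sum_erase Finset.univ (lam e) (Finset.mem_univ (i1 e))
      linarith
    have := (Finset.sum_eq_zero_iff_of_nonneg
      (fun j _ => hlamnn e j)).mp h2 i (Finset.mem_erase.mpr ⟨hi, Finset.mem_univ i⟩)
    exact this
  obtain ⟨χ, hχ1, hχ2⟩ := psd_decomp (hPpsd e) (i1 e) hzero
  refine ⟨χ, hχ1, ?_⟩
  rw [hχ2, dot_star_self]
  have h3 : lam e (i1 e) = nsq (ψ e) := by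
    have := heq e
    have := hub e
    have := Finset.single_le_sum (fun j (_ : j ∈ Finset.univ) => hlamnn e j)
      (Finset.mem_univ (i1 e))
    linarith
  exact_mod_cast h3

end CleanPOVM

open CleanPOVM

/-- rank-one POVMs are clean; indeed if `Q` is rank-one, then `P ≻ Q`
iff `P` and `Q` are unitarily equivalent. -/
theorem clean_povm_stmt19 (d : ℕ) (hd : 1 ≤ d) (E : Type) [Fintype E]
    (P Q : E → Matrix (Fin d) (Fin d) ℂ) (hP : IsPOVM P) (hQ : IsPOVM Q)
    (hQrank : ∀ e, (Q e).rank ≤ 1) :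
    Cleaner P Q ↔
      ∃ U : Matrix (Fin d) (Fin d) ℂ, Uᴴ * U = 1 ∧ ∀ e, Q e = U * P e * Uᴴ := by
  constructor
  · rintro ⟨n, A, hA1, hA2⟩
    -- Step 0 : a rank-one representation of Q
    have hψex : ∀ e, ∃ v : Fin d → ℂ, Q e = vecMulVec v (star v) := by
      intro e
      have hcard : Fintype.card {i // (hQ.1 e).1.eigenvalues i ≠ 0} ≤ 1 := by
        rw [← (hQ.1 e).1.rank_eq_card_non_zero_eigs]
        exact hQrank e
      obtain ⟨i0, hi0⟩ := exists_i0 hd _ hcard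
      obtain ⟨v, hv, -⟩ := psd_decomp (hQ.1 e) i0 hi0
      exact ⟨v, hv⟩
    choose ψ hψ using hψex
    -- Step A : a rank-one representation of P with matching norms
    have hχex := stepA hd P Q hP.1 hP.2 hQ.2 A hA1 hA2 ψ hψ
    choose χ hχ hnorm using hχex
    -- vanishing together
    have hzero : ∀ e, ψ e = 0 → χ e = 0 := by
      intro e h0
      apply dotProduct_star_self_eq_zero.mp
      rw [hnorm e, h0]
      simp
    -- the matrix identity in rank-one form
    have hmat : ∀ e, ∑ k, vecMulVec ((A k)ᴴ *ᵥ χ e) (star ((A k)ᴴ *ᵥ χ e))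
        = vecMulVec (ψ e) (star (ψ e)) := by
      intro e
      rw [← hψ e, ← hA2 e]
      refine Finset.sum_congr rfl fun k _ => ?_
      rw [hχ e, conj_sandwich_vmv]
    -- Step B1 : A_k† χ_e = μ_{e,k} ψ_e
    have hμex : ∀ e, ∀ k, ∃ μ : ℂ, (A k)ᴴ *ᵥ χ e = μ • ψ e :=
      fun e => sum_outer_rankone _ _ (hmat e)
    choose μ hμ using hμex
    -- Step B2 : ∑_k |μ_{e,k}|² = 1  whenever ψ_e ≠ 0
    have hB2 : ∀ e, ψ e ≠ 0 → ∑ k, (starRingEnd ℂ) (μ e k) * μ e k = 1 := by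
      intro e hne
      have h1 : ∑ k, vecMulVec (μ e k • ψ e) (star (μ e k • ψ e))
          = vecMulVec (ψ e) (star (ψ e)) := by
        rw [← hmat e]
        exact Finset.sum_congr rfl fun k _ => by rw [hμ e k]
      have h2 : ∀ k : Fin n, vecMulVec (μ e k • ψ e) (star (μ e k • ψ e))
          = ((starRingEnd ℂ) (μ e k) * μ e k) • vecMulVec (ψ e) (star (ψ e)) := by
        intro k
        ext i j
        simp only [vecMulVec_apply, Pi.smul_apply, Pi.star_apply, smul_eq_mul,
          star_smul, Matrix.smul_apply, RCLike.star_def]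
        ring
      rw [Finset.sum_congr rfl fun k _ => h2 k, ← Finset.sum_smul] at h1
      by_contra hc
      have h3 : ((∑ k, (starRingEnd ℂ) (μ e k) * μ e k) - 1) • vecMulVec (ψ e) (star (ψ e)) = 0 := by
        rw [sub_smul, one_smul, h1, sub_self]
      rcases smul_eq_zero.mp h3 with h4 | h4
      · exact hc (by linear_combination h4)
      · obtain ⟨j, hj⟩ := Function.ne_iff.mp hne
        have h5 := congrFun (congrFun h4 j) j
        simp only [vecMulVec_apply, Pi.star_apply, Matrix.zero_apply, RCLike.star_def] at h5
        have h6 : (Complex.normSq (ψ e j) : ℂ) = 0 := by rw [← Complex.mul_conj]; exact h5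
        exact hj (Complex.normSq_eq_zero.mp (by exact_mod_cast h6))
    -- abbreviations
    have hPsum' : ∑ e, vecMulVec (χ e) (star (χ e)) = 1 := by
      rw [← hP.2]; exact Finset.sum_congr rfl fun e _ => (hχ e).symm
    have hQsum' : ∑ e, vecMulVec (ψ e) (star (ψ e)) = 1 := by
      rw [← hQ.2]; exact Finset.sum_congr rfl fun e _ => (hψ e).symm
    -- Step B3 : A_k ψ_e = conj μ_{e,k} • χ_e
    have hB3 : ∀ e k, A k *ᵥ ψ e = (starRingEnd ℂ) (μ e k) • χ e := by
      intro e k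
      by_cases hne : ψ e = 0
      · rw [hne, hzero e hne]; simp
      · have hsreal : (starRingEnd ℂ) (star (ψ e) ⬝ᵥ ψ e) = star (ψ e) ⬝ᵥ ψ e := by
          rw [dot_star_self]; exact Complex.conj_ofReal _
        have hdot1 : ∀ j : Fin n, star (χ e) ⬝ᵥ (A j *ᵥ ψ e)
            = (starRingEnd ℂ) (μ e j) * (star (ψ e) ⬝ᵥ ψ e) := by
          intro j
          rw [dotProduct_mulVec]
          have h1 : star (χ e) ᵥ* A j = star ((A j)ᴴ *ᵥ χ e) := by
            rw [star_mulVec, conjTranspose_conjTranspose]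
          rw [h1, hμ e j, star_smul, smul_dotProduct, smul_eq_mul, RCLike.star_def]
        have hT1 : ∀ j : Fin n, star (A j *ᵥ ψ e) ⬝ᵥ (A j *ᵥ ψ e)
            = star (ψ e) ⬝ᵥ (((A j)ᴴ * A j) *ᵥ ψ e) := by
          intro j
          rw [star_mulVec, ← mulVec_mulVec, ← dotProduct_mulVec]
        have hT1sum : ∑ j, star (A j *ᵥ ψ e) ⬝ᵥ (A j *ᵥ ψ e) = star (ψ e) ⬝ᵥ ψ e := by
          rw [Finset.sum_congr rfl fun j _ => hT1 j, ← dot_sum, ← CleanPOVM.sum_mulVec, hA1, one_mulVec]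
        set r : Fin n → Fin d → ℂ :=
          fun j => A j *ᵥ ψ e - (starRingEnd ℂ) (μ e j) • χ e with hr
        have hrk : ∀ j : Fin n, star (r j) ⬝ᵥ r j
            = star (A j *ᵥ ψ e) ⬝ᵥ (A j *ᵥ ψ e)
              - ((starRingEnd ℂ) (μ e j) * μ e j) * (star (ψ e) ⬝ᵥ ψ e) := by
          intro j
          have e1 : star (A j *ᵥ ψ e) ⬝ᵥ ((starRingEnd ℂ) (μ e j) • χ e)
              = (starRingEnd ℂ) (μ e j) * (μ e j * (star (ψ e) ⬝ᵥ ψ e)) := by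
            rw [dotProduct_smul, smul_eq_mul, conj_dot (χ e) (A j *ᵥ ψ e), hdot1 j, RingHom.map_mul,
              Complex.conj_conj, hsreal]
          have e2 : star ((starRingEnd ℂ) (μ e j) • χ e) ⬝ᵥ (A j *ᵥ ψ e)
              = μ e j * ((starRingEnd ℂ) (μ e j) * (star (ψ e) ⬝ᵥ ψ e)) := by
            rw [star_smul, smul_dotProduct, smul_eq_mul, hdot1 j, RCLike.star_def,
              Complex.conj_conj]
          have e3 : star ((starRingEnd ℂ) (μ e j) • χ e) ⬝ᵥ ((starRingEnd ℂ) (μ e j) • χ e)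
              = μ e j * ((starRingEnd ℂ) (μ e j) * (star (ψ e) ⬝ᵥ ψ e)) := by
            rw [star_smul, smul_dotProduct, dotProduct_smul, hnorm e, RCLike.star_def,
              Complex.conj_conj]
            try simp only [smul_eq_mul]
            try ring
          rw [hr]
          simp only [star_sub, sub_dotProduct, dotProduct_sub]
          rw [e1, e2, e3]
          ring
        have hsum0 : ∑ j, star (r j) ⬝ᵥ r j = 0 := by
          rw [Finset.sum_congr rfl fun j _ => hrk j, Finset.sum_sub_distrib, hT1sum,
            ← Finset.sum_mul, hB2 e hne, one_mul, sub_self]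
        have hsumr : ∑ j, ((nsq (r j) : ℝ) : ℂ) = 0 := by
          rw [← hsum0]
          exact Finset.sum_congr rfl fun j _ => (dot_star_self (r j)).symm
        have hsumr' : ∑ j, nsq (r j) = 0 := by exact_mod_cast hsumr
        have hr0 : r k = 0 := nsq_eq_zero ((Finset.sum_eq_zero_iff_of_nonneg
          (fun j _ => nsq_nonneg (r j))).mp hsumr' k (Finset.mem_univ k))
        have := sub_eq_zero.mp hr0
        exact this
    -- Step B4 : the Gram identity
    have hB4 : ∀ e f, star (ψ e) ⬝ᵥ ψ f
        = (∑ k, μ e k * (starRingEnd ℂ) (μ f k)) * (star (χ e) ⬝ᵥ χ f) := by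
      intro e f
      have h1 : star (ψ e) ⬝ᵥ ψ f = ∑ k, star (A k *ᵥ ψ e) ⬝ᵥ (A k *ᵥ ψ f) := by
        calc star (ψ e) ⬝ᵥ ψ f = star (ψ e) ⬝ᵥ ((∑ k, (A k)ᴴ * A k) *ᵥ ψ f) := by
              rw [hA1, one_mulVec]
          _ = ∑ k, star (ψ e) ⬝ᵥ (((A k)ᴴ * A k) *ᵥ ψ f) := by rw [CleanPOVM.sum_mulVec, dot_sum]
          _ = ∑ k, star (A k *ᵥ ψ e) ⬝ᵥ (A k *ᵥ ψ f) := by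
              refine Finset.sum_congr rfl fun k _ => ?_
              rw [star_mulVec, ← mulVec_mulVec, ← dotProduct_mulVec]
      rw [h1, Finset.sum_mul]
      refine Finset.sum_congr rfl fun k _ => ?_
      rw [hB3 e k, hB3 f k, star_smul, smul_dotProduct, dotProduct_smul, RCLike.star_def,
        Complex.conj_conj]
      simp only [smul_eq_mul]
      ring
    -- unit ν-vectors
    set ν : E → Fin n → ℂ := fun e k => (starRingEnd ℂ) (μ e k) with hνdef
    have hunit : ∀ e, ψ e ≠ 0 → star (ν e) ⬝ᵥ ν e = 1 := by
      intro e hne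
      rw [← hB2 e hne]
      simp only [hνdef, dotProduct, Pi.star_apply, RCLike.star_def, Complex.conj_conj]
      exact Finset.sum_congr rfl fun k _ => mul_comm _ _
    have hmval : ∀ e f, star (ν e) ⬝ᵥ ν f = ∑ k, μ e k * (starRingEnd ℂ) (μ f k) := by
      intro e f
      simp only [hνdef, dotProduct, Pi.star_apply, RCLike.star_def, Complex.conj_conj]
    have hν0 : ∀ e, ψ e ≠ 0 → ν e ≠ 0 := by
      intro e hne h0
      have := hunit e hne
      rw [h0] at this
      simp at this
    -- Step B5 : pointwise equality of Gram moduli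
    have hd1 := frame_sum ψ hQsum'
    have hd2 := frame_sum χ hPsum'
    have hpt : ∀ e f, Complex.normSq (star (ψ e) ⬝ᵥ ψ f)
        ≤ Complex.normSq (star (χ e) ⬝ᵥ χ f) := by
      intro e f
      by_cases he : ψ e = 0
      · rw [he]; simpa using Complex.normSq_nonneg _
      by_cases hf : ψ f = 0
      · rw [hf]; simpa using Complex.normSq_nonneg _
      rw [hB4 e f, Complex.normSq_mul]
      have h1 := (unit_cs (ν e) (ν f) (hunit e he) (hunit f hf)).1
      rw [hmval e f] at h1
      exact mul_le_of_le_one_left (Complex.normSq_nonneg _) h1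
    have hpteq : ∀ e f, Complex.normSq (star (ψ e) ⬝ᵥ ψ f)
        = Complex.normSq (star (χ e) ⬝ᵥ χ f) := by
      have hflat : ∑ p : E × E, (Complex.normSq (star (χ p.1) ⬝ᵥ χ p.2)
          - Complex.normSq (star (ψ p.1) ⬝ᵥ ψ p.2)) = 0 := by
        rw [Finset.sum_sub_distrib, Fintype.sum_prod_type, Fintype.sum_prod_type, hd1, hd2]
        ring
      intro e f
      have := (Finset.sum_eq_zero_iff_of_nonneg
        (fun p _ => sub_nonneg.mpr (hpt p.1 p.2))).mp hflat (e, f) (Finset.mem_univ _)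
      linarith
    -- phases
    set ω : E → ℂ := fun e => if ψ e = 0 then 1 else phase (ν e) with hωdef
    have hωu : ∀ e, (starRingEnd ℂ) (ω e) * ω e = 1 := by
      intro e
      by_cases h : ψ e = 0
      · simp [hωdef, h]
      · simp only [hωdef, if_neg h]
        exact phase_unit (hν0 e h)
    -- the phased Gram identity
    have hstar : ∀ e f, star (ψ e) ⬝ᵥ ψ f
        = (starRingEnd ℂ) (ω e) * ω f * (star (χ e) ⬝ᵥ χ f) := by
      intro e f
      by_cases he : ψ e = 0
      · rw [he, hzero e he]; simp
      by_cases hf : ψ f = 0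
      · rw [hf, hzero f hf]; simp
      by_cases hK : star (χ e) ⬝ᵥ χ f = 0
      · rw [hB4 e f, hK]; ring
      · have hns : Complex.normSq (∑ k, μ e k * (starRingEnd ℂ) (μ f k)) = 1 := by
          have h1 := hpteq e f
          rw [hB4 e f, Complex.normSq_mul] at h1
          have h2 : Complex.normSq (star (χ e) ⬝ᵥ χ f) ≠ 0 :=
            fun hc => hK (Complex.normSq_eq_zero.mp hc)
          exact mul_right_cancel₀ h2 (by rw [one_mul]; exact h1)
        set m : ℂ := ∑ k, μ e k * (starRingEnd ℂ) (μ f k) with hm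
        have hpar := (unit_cs (ν e) (ν f) (hunit e he) (hunit f hf)).2
          (by rw [hmval e f, ← hm]; exact hns)
        have hmunit : (starRingEnd ℂ) m * m = 1 := by
          rw [← Complex.normSq_eq_conj_mul_self, hns]
          norm_num
        have hωf : ω f = m * ω e := by
          simp only [hωdef, if_neg he, if_neg hf]
          rw [hmval e f, ← hm] at hpar
          rw [hpar]
          exact phase_smul (hν0 e he) hmunit
        rw [hB4 e f, ← hm, hωf]
        linear_combination (-(m * (star (χ e) ⬝ᵥ χ f))) * hωu e
    have hKform : ∀ e f, star (χ e) ⬝ᵥ χ f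
        = ω e * (starRingEnd ℂ) (ω f) * (star (ψ e) ⬝ᵥ ψ f) := by
      intro e f
      rw [hstar e f]
      linear_combination (-((star (χ e) ⬝ᵥ χ f) * ((starRingEnd ℂ) (ω f) * ω f))) * hωu e
        + (-(star (χ e) ⬝ᵥ χ f)) * hωu f
    -- the unitary
    set U : Matrix (Fin d) (Fin d) ℂ :=
      ∑ e, (starRingEnd ℂ) (ω e) • vecMulVec (ψ e) (star (χ e)) with hUdef
    have hUH : Uᴴ = ∑ e, ω e • vecMulVec (χ e) (star (ψ e)) := by
      rw [hUdef, conjTranspose_sum]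
      refine Finset.sum_congr rfl fun e _ => ?_
      rw [conjTranspose_smul, ct_vmv, RCLike.star_def, Complex.conj_conj]
    have hUP : ∀ e, U * P e = (starRingEnd ℂ) (ω e) • vecMulVec (ψ e) (star (χ e)) := by
      intro e
      rw [hUdef, hχ e, Finset.sum_mul]
      have hterm : ∀ f, ((starRingEnd ℂ) (ω f) • vecMulVec (ψ f) (star (χ f)))
          * vecMulVec (χ e) (star (χ e))
          = (starRingEnd ℂ) (ω e) • ((star (ψ f) ⬝ᵥ ψ e) • vecMulVec (ψ f) (star (χ e))) := by
        intro f
        rw [Matrix.smul_mul, vmv_mul_vmv, smul_smul, smul_smul]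
        congr 1
        rw [hKform f e]
        linear_combination ((starRingEnd ℂ) (ω e) * (star (ψ f) ⬝ᵥ ψ e)) * hωu f
      rw [Finset.sum_congr rfl fun f _ => hterm f, ← Finset.smul_sum]
      congr 1
      have h2 : ∀ f, (star (ψ f) ⬝ᵥ ψ e) • vecMulVec (ψ f) (star (χ e))
          = vecMulVec (ψ f) (star (ψ f)) * vecMulVec (ψ e) (star (χ e)) :=
        fun f => (vmv_mul_vmv _ _ _ _).symm
      rw [Finset.sum_congr rfl fun f _ => h2 f, ← Finset.sum_mul, hQsum', one_mul]
    have hPUH : ∀ e, vecMulVec (ψ e) (star (χ e)) * Uᴴ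
        = ω e • vecMulVec (ψ e) (star (ψ e)) := by
      intro e
      rw [hUH, Finset.mul_sum]
      have hterm : ∀ f, vecMulVec (ψ e) (star (χ e)) * (ω f • vecMulVec (χ f) (star (ψ f)))
          = ω e • ((star (ψ e) ⬝ᵥ ψ f) • vecMulVec (ψ e) (star (ψ f))) := by
        intro f
        rw [Matrix.mul_smul, vmv_mul_vmv, smul_smul, smul_smul]
        congr 1
        rw [hKform e f]
        linear_combination (ω e * (star (ψ e) ⬝ᵥ ψ f)) * hωu f
      rw [Finset.sum_congr rfl fun f _ => hterm f, ← Finset.smul_sum]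
      congr 1
      have h2 : ∀ f, (star (ψ e) ⬝ᵥ ψ f) • vecMulVec (ψ e) (star (ψ f))
          = vecMulVec (ψ e) (star (ψ e)) * vecMulVec (ψ f) (star (ψ f)) :=
        fun f => (vmv_mul_vmv _ _ _ _).symm
      rw [Finset.sum_congr rfl fun f _ => h2 f, ← Finset.mul_sum, hQsum', mul_one]
    refine ⟨U, ?_, ?_⟩
    · rw [hUH]
      conv_lhs => rw [hUdef]
      rw [Finset.sum_mul_sum]
      have hterm : ∀ e f, (ω e • vecMulVec (χ e) (star (ψ e)))
          * ((starRingEnd ℂ) (ω f) • vecMulVec (ψ f) (star (χ f)))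
          = vecMulVec (χ e) (star (χ e)) * vecMulVec (χ f) (star (χ f)) := by
        intro e f
        rw [Matrix.smul_mul, Matrix.mul_smul, vmv_mul_vmv, vmv_mul_vmv, smul_smul, smul_smul]
        rw [hstar e f]
        congr 1
        linear_combination (((starRingEnd ℂ) (ω f) * ω f) * (star (χ e) ⬝ᵥ χ f)) * hωu e
          + (star (χ e) ⬝ᵥ χ f) * hωu f
      rw [Finset.sum_congr rfl fun e _ => Finset.sum_congr rfl fun f _ => hterm e f,
        ← Finset.sum_mul_sum, hPsum', one_mul]
    · intro e
      have hfin : U * P e * Uᴴ = ((starRingEnd ℂ) (ω e) * ω e)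
          • vecMulVec (ψ e) (star (ψ e)) := by
        rw [hUP e, Matrix.smul_mul, hPUH e, smul_smul]
      rw [hfin, hωu e, one_smul]
      exact hψ e
  · rintro ⟨U, hU, hUP⟩
    refine ⟨1, fun _ => Uᴴ, ?_, ?_⟩
    · rw [Fin.sum_univ_one, conjTranspose_conjTranspose, mul_eq_one_comm.mp hU]
    · intro e
      rw [Fin.sum_univ_one, conjTranspose_conjTranspose, ← hUP e]
end
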